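/- arXiv:1507.04397 — 6 statements merged into one kernel-verified Lean document; each statement's English description precedes it below -/
import Mathlib

section
/- Assume β ∈ [0,1), that U_D is nonempty, and that Z_D > 0. Let ε > 0 and suppose ℓ ≤ ε(1−β)Z_D. Then the discretization error Δ := (Z_C − Z_D)/Z_C satisfies 0 ≤ Δ ≤ ε. -/
open MeasureTheory

/-- The plane ℝ². -/
abbrev Plane := EuclideanSpace ℝ (Fin 2)

/-- Conditional value-at-risk at level `β` of the loss `f` under the measure `μ`:
`CVaR_β^μ(f) = inf_{α ≥ 0} (α + (1/(1-β)) ∫ max (f x - α) 0 dμ)`. -/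
noncomputable def cvar (β : ℝ) (μ : Measure Plane) (f : Plane → ℝ) : ℝ :=
  sInf {v : ℝ | ∃ α : ℝ, 0 ≤ α ∧ v = α + (1 / (1 - β)) * ∫ x, max (f x - α) 0 ∂μ}

/-- The discrete support set `Ξ = ⋃ r, Ξ'_r`. -/
def XiSet {R : Type*} (Ξ' : R → Set Plane) : Set Plane := ⋃ r, Ξ' r

/-- The uncertainty region `A_j = ⋃_{r ∈ R_j} A'_r`. -/
def uncRegion {R J : Type*} (A' : R → Set Plane) (Rj : J → Set R) (j : J) : Set Plane :=
  ⋃ r ∈ Rj j, A' r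

/-- The continuous distributional uncertainty set `U_C`. -/
def UC {R J : Type*} (A : Set Plane) (A' : R → Set Plane) (Rj : J → Set R) (lam : J → ℝ) :
    Set (Measure Plane) :=
  {μ | μ Set.univ = 1 ∧ μ A = 1 ∧ ∀ j, μ (uncRegion A' Rj j) = ENNReal.ofReal (lam j)}

/-- The discrete distributional uncertainty set `U_D`. -/
def UD {R J : Type*} (A : Set Plane) (A' : R → Set Plane) (Rj : J → Set R) (lam : J → ℝ)
    (Ξ' : R → Set Plane) : Set (Measure Plane) :=
  {μ ∈ UC A A' Rj lam | μ (XiSet Ξ') = 1}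

/-- The distance `f_y(x) = min_{i ∈ y} ‖x - c_i‖` to the nearest deployed facility. -/
noncomputable def distToDeployment {I : Type*} (c : I → Plane) (y : Finset I) (x : Plane) : ℝ :=
  ⨅ i : y, ‖x - c i.1‖

/-- Worst-case CVaR over an uncertainty set of measures. -/
noncomputable def worstCVaR (β : ℝ) (𝒰 : Set (Measure Plane)) (f : Plane → ℝ) : ℝ :=
  sSup {w : ℝ | ∃ μ ∈ 𝒰, w = cvar β μ f}

/-- The optimal worst-case CVaR over all deployments of `P` facilities. -/
noncomputable def optVal {I : Type*} (β : ℝ) (𝒰 : Set (Measure Plane)) (c : I → Plane)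
    (P : ℕ) : ℝ :=
  sInf {v : ℝ | ∃ y : Finset I, y.card = P ∧ v = worstCVaR β 𝒰 (distToDeployment c y)}


namespace DiscAux


open scoped Classical in
noncomputable def pickAux (ℓ : ℝ) : List Plane → Plane → Plane
  | [], _ => 0
  | ξ :: L, a => if ‖a - ξ‖ ≤ ℓ then ξ else pickAux ℓ L a

lemma pickAux_measurable (ℓ : ℝ) (L : List Plane) : Measurable (pickAux ℓ L) := by
  induction L with
  | nil => simp only [pickAux]; exact measurable_const
  | cons ξ L ih =>
    have h : MeasurableSet {a : Plane | ‖a - ξ‖ ≤ ℓ} :=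
      measurableSet_le (by fun_prop) measurable_const
    simp only [pickAux]
    exact Measurable.ite h measurable_const ih

lemma pickAux_spec (ℓ : ℝ) (L : List Plane) (a : Plane)
    (h : ∃ ξ ∈ L, ‖a - ξ‖ ≤ ℓ) :
    pickAux ℓ L a ∈ L ∧ ‖a - pickAux ℓ L a‖ ≤ ℓ := by
  induction L with
  | nil => simp at h
  | cons ξ L ih =>
    by_cases hξ : ‖a - ξ‖ ≤ ℓ
    · simp [pickAux, hξ]
    · obtain ⟨ζ, hζ, hd⟩ := h
      rcases List.mem_cons.1 hζ with rfl | hζ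
      · exact absurd hd hξ
      · have := ih ⟨ζ, hζ, hd⟩
        simp only [pickAux, if_neg hξ]
        exact ⟨List.mem_cons_of_mem _ this.1, this.2⟩

open scoped Classical in
noncomputable def glueT {R : Type*} (A' : R → Set Plane) (g : R → Plane → Plane) :
    List R → Plane → Plane
  | [], _ => 0
  | r :: L, a => if a ∈ A' r then g r a else glueT A' g L a

lemma glueT_measurable {R : Type*} (A' : R → Set Plane) (hA' : ∀ r, MeasurableSet (A' r))
    (g : R → Plane → Plane) (hg : ∀ r, Measurable (g r)) (L : List R) :
    Measurable (glueT A' g L) := by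
  induction L with
  | nil => simp only [glueT]; exact measurable_const
  | cons r L ih =>
    simp only [glueT]
    exact Measurable.ite (hA' r) (hg r) ih

lemma glueT_spec {R : Type*} (A' : R → Set Plane)
    (hdisj : Pairwise (Function.onFun Disjoint A'))
    (g : R → Plane → Plane) (L : List R) (r : R) (hr : r ∈ L)
    (a : Plane) (ha : a ∈ A' r) : glueT A' g L a = g r a := by
  induction L with
  | nil => simp at hr
  | cons r' L ih =>
    by_cases h : a ∈ A' r'
    · have : r' = r := by
        by_contra hne
        exact Set.disjoint_left.1 (hdisj hne) h ha
      subst this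
      simp [glueT, h]
    · have hr' : r ∈ L := by
        rcases List.mem_cons.1 hr with rfl | h'
        · exact absurd ha h
        · exact h'
      simp only [glueT, if_neg h]
      exact ih hr'

lemma exists_T {R : Type*} [Fintype R] (A' : R → Set Plane)
    (hA'meas : ∀ r, MeasurableSet (A' r))
    (hA'disj : Pairwise (Function.onFun Disjoint A'))
    (Ξ' : R → Set Plane) (hΞ'fin : ∀ r, (Ξ' r).Finite)
    (ℓ : ℝ) (hℓ : ∀ r, ∀ a ∈ A' r, ∃ ξ ∈ Ξ' r, ‖a - ξ‖ ≤ ℓ) :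
    ∃ T : Plane → Plane, Measurable T ∧
      ∀ r, ∀ a ∈ A' r, T a ∈ Ξ' r ∧ ‖a - T a‖ ≤ ℓ := by
  refine ⟨glueT A' (fun r => pickAux ℓ (hΞ'fin r).toFinset.toList) Finset.univ.toList,
    glueT_measurable _ hA'meas _ (fun r => pickAux_measurable ℓ _) _, fun r a ha => ?_⟩
  rw [glueT_spec A' hA'disj _ _ r (Finset.mem_toList.2 (Finset.mem_univ r)) a ha]
  have hex : ∃ ξ ∈ (hΞ'fin r).toFinset.toList, ‖a - ξ‖ ≤ ℓ := by
    obtain ⟨ξ, hξ, hd⟩ := hℓ r a ha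
    exact ⟨ξ, by simp [hξ], hd⟩
  obtain ⟨h1, h2⟩ := pickAux_spec ℓ _ a hex
  refine ⟨?_, h2⟩
  have := Finset.mem_toList.1 h1
  simpa using this



lemma cvar_set_nonneg {β : ℝ} (hβ : β < 1) (μ : Measure Plane) (f : Plane → ℝ) :
    ∀ v ∈ {v : ℝ | ∃ α : ℝ, 0 ≤ α ∧ v = α + (1 / (1 - β)) * ∫ x, max (f x - α) 0 ∂μ},
      (0 : ℝ) ≤ v := by
  rintro v ⟨α, hα, rfl⟩
  have hb : (0:ℝ) < 1 - β := by linarith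
  have h1 : (0:ℝ) ≤ 1 / (1 - β) := by positivity
  have h2 : (0:ℝ) ≤ ∫ x, max (f x - α) 0 ∂μ :=
    integral_nonneg fun x => le_max_right _ _
  positivity

lemma cvar_nonneg {β : ℝ} (hβ : β < 1) (μ : Measure Plane) (f : Plane → ℝ) :
    0 ≤ cvar β μ f :=
  le_csInf ⟨_, 0, le_rfl, rfl⟩ (cvar_set_nonneg hβ μ f)

lemma cvar_bddBelow {β : ℝ} (hβ : β < 1) (μ : Measure Plane) (f : Plane → ℝ) :
    BddBelow {v : ℝ | ∃ α : ℝ, 0 ≤ α ∧ v = α + (1 / (1 - β)) * ∫ x, max (f x - α) 0 ∂μ} :=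
  ⟨0, cvar_set_nonneg hβ μ f⟩

lemma cvar_le_bound {μ : Measure Plane} (hμ : μ Set.univ = 1)
    {A : Set Plane} (hAe : ∀ᵐ a ∂μ, a ∈ A)
    {f : Plane → ℝ} (hfc : Continuous f) (hf0 : ∀ x, 0 ≤ f x)
    {M : ℝ} (hM0 : 0 ≤ M) (hfM : ∀ x ∈ A, f x ≤ M)
    {β : ℝ} (hβ : β < 1) :
    cvar β μ f ≤ (1 / (1 - β)) * M := by
  have hfin : IsFiniteMeasure μ := ⟨by rw [hμ]; exact ENNReal.one_lt_top⟩
  have hb : (0:ℝ) < 1 - β := by linarith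
  have h1 : (0:ℝ) ≤ 1 / (1 - β) := by positivity
  have hg : Continuous fun x => max (f x - (0:ℝ)) 0 :=
    (hfc.sub continuous_const).max continuous_const
  have hbd : ∀ᵐ x ∂μ, ‖max (f x - (0:ℝ)) 0‖ ≤ M := by
    filter_upwards [hAe] with x hx
    rw [Real.norm_eq_abs, abs_of_nonneg (le_max_right _ _)]
    exact max_le (by simpa using hfM x hx) hM0
  have hgi : Integrable (fun x => max (f x - (0:ℝ)) 0) μ :=
    Integrable.mono' (integrable_const M) hg.aestronglyMeasurable hbd
  have hint : ∫ x, max (f x - (0:ℝ)) 0 ∂μ ≤ M := by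
    calc ∫ x, max (f x - (0:ℝ)) 0 ∂μ ≤ ∫ _x, M ∂μ := by
          refine integral_mono_ae hgi (integrable_const M) ?_
          filter_upwards [hAe] with x hx
          exact max_le (by simpa using hfM x hx) hM0
      _ = M := by simp [integral_const, measureReal_def, hμ]
  calc cvar β μ f ≤ 0 + (1 / (1 - β)) * ∫ x, max (f x - (0:ℝ)) 0 ∂μ :=
        csInf_le (cvar_bddBelow hβ μ f) ⟨0, le_rfl, rfl⟩
    _ ≤ (1 / (1 - β)) * M := by
        rw [zero_add]
        exact mul_le_mul_of_nonneg_left hint h1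

lemma cvar_map_le {μ : Measure Plane} (hμ : μ Set.univ = 1)
    {A : Set Plane} (hAe : ∀ᵐ a ∂μ, a ∈ A)
    {T : Plane → Plane} (hTm : Measurable T)
    (hTA : ∀ a ∈ A, T a ∈ A) {ℓ : ℝ} (hℓ0 : 0 ≤ ℓ)
    (hTd : ∀ a ∈ A, ‖a - T a‖ ≤ ℓ)
    {f : Plane → ℝ} (hfc : Continuous f) (hf0 : ∀ x, 0 ≤ f x)
    (hfl : ∀ x z, f x ≤ f z + ‖x - z‖)
    {M : ℝ} (hM0 : 0 ≤ M) (hfM : ∀ x ∈ A, f x ≤ M)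
    {β : ℝ} (hβ : β < 1) :
    cvar β μ f ≤ cvar β (μ.map T) f + (1 / (1 - β)) * ℓ := by
  have hfin : IsFiniteMeasure μ := ⟨by rw [hμ]; exact ENNReal.one_lt_top⟩
  have hb : (0:ℝ) < 1 - β := by linarith
  have h1 : (0:ℝ) ≤ 1 / (1 - β) := by positivity
  rw [← sub_le_iff_le_add]
  refine le_csInf ⟨_, 0, le_rfl, rfl⟩ ?_
  rintro v' ⟨α, hα, rfl⟩
  rw [sub_le_iff_le_add]
  set g : Plane → ℝ := fun x => max (f x - α) 0 with hgdef
  have hgc : Continuous g := (hfc.sub continuous_const).max continuous_const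
  have hgbd : ∀ x ∈ A, g x ≤ M := fun x hx =>
    max_le (le_trans (by linarith [hfM x hx]) le_rfl) hM0
  have hgi : Integrable g μ := by
    refine Integrable.mono' (integrable_const M) hgc.aestronglyMeasurable ?_
    filter_upwards [hAe] with x hx
    rw [Real.norm_eq_abs, abs_of_nonneg (le_max_right _ _)]
    exact hgbd x hx
  have hgTi : Integrable (fun x => g (T x)) μ := by
    refine Integrable.mono' (integrable_const M)
      (hgc.measurable.comp hTm).aestronglyMeasurable ?_
    filter_upwards [hAe] with x hx
    rw [Real.norm_eq_abs, abs_of_nonneg (le_max_right _ _)]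
    exact hgbd _ (hTA x hx)
  have hmap : ∫ x, g x ∂(μ.map T) = ∫ x, g (T x) ∂μ :=
    integral_map hTm.aemeasurable hgc.aestronglyMeasurable
  have hptwise : ∀ᵐ x ∂μ, g x ≤ g (T x) + ℓ := by
    filter_upwards [hAe] with x hx
    have h2 : f x ≤ f (T x) + ℓ :=
      le_trans (hfl x (T x)) (by linarith [hTd x hx])
    refine max_le ?_ (by positivity)
    calc f x - α ≤ (f (T x) - α) + ℓ := by linarith
      _ ≤ g (T x) + ℓ := by
          have := le_max_left (f (T x) - α) 0
          linarith
  have hint : ∫ x, g x ∂μ ≤ (∫ x, g x ∂(μ.map T)) + ℓ := by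
    rw [hmap]
    calc ∫ x, g x ∂μ ≤ ∫ x, (g (T x) + ℓ) ∂μ :=
          integral_mono_ae hgi (hgTi.add (integrable_const ℓ)) hptwise
      _ = (∫ x, g (T x) ∂μ) + ℓ := by
          rw [integral_add hgTi (integrable_const ℓ)]
          simp [integral_const, measureReal_def, hμ]
  calc cvar β μ f ≤ α + (1 / (1 - β)) * ∫ x, g x ∂μ :=
        csInf_le (cvar_bddBelow hβ μ f) ⟨α, hα, rfl⟩
    _ ≤ α + (1 / (1 - β)) * ((∫ x, g x ∂(μ.map T)) + ℓ) := by
        have := mul_le_mul_of_nonneg_left hint h1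
        linarith
    _ = (α + (1 / (1 - β)) * ∫ x, g x ∂(μ.map T)) + (1 / (1 - β)) * ℓ := by ring



lemma dist_nonneg' {I : Type*} (c : I → Plane) (y : Finset I) (x : Plane) :
    0 ≤ distToDeployment c y x :=
  Real.iInf_nonneg fun _ => norm_nonneg _

lemma dist_le' {I : Type*} (c : I → Plane) {y : Finset I} {i : I} (hi : i ∈ y) (x : Plane) :
    distToDeployment c y x ≤ ‖x - c i‖ :=
  ciInf_le ⟨0, by rintro _ ⟨j, rfl⟩; exact norm_nonneg _⟩ (⟨i, hi⟩ : y)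

lemma dist_lip' {I : Type*} (c : I → Plane) {y : Finset I} (hy : y.Nonempty) (x z : Plane) :
    distToDeployment c y x ≤ distToDeployment c y z + ‖x - z‖ := by
  have : Nonempty y := hy.to_subtype
  obtain ⟨i, hi⟩ := Finite.exists_min (fun i : y => ‖z - c i.1‖)
  have h1 : distToDeployment c y z = ‖z - c i.1‖ :=
    le_antisymm (dist_le' c i.2 z) (le_ciInf hi)
  calc distToDeployment c y x ≤ ‖x - c i.1‖ := dist_le' c i.2 x
    _ ≤ ‖z - c i.1‖ + ‖x - z‖ := by
        have h : x - c i.1 = (x - z) + (z - c i.1) := by abel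
        rw [h]
        simpa [add_comm] using norm_add_le (x - z) (z - c i.1)
    _ = _ := by rw [h1]

lemma dist_continuous' {I : Type*} (c : I → Plane) {y : Finset I} (hy : y.Nonempty) :
    Continuous (distToDeployment c y) := by
  have hl : LipschitzWith 1 (distToDeployment c y) := by
    refine LipschitzWith.of_dist_le_mul fun x z => ?_
    rw [Real.dist_eq, NNReal.coe_one, one_mul, dist_eq_norm, abs_sub_le_iff]
    constructor
    · linarith [dist_lip' c hy x z]
    · have h := dist_lip' c hy z x
      rw [norm_sub_rev] at h
      linarith
  exact hl.continuous



lemma compl_null {μ : Measure Plane} {A : Set Plane} (hAmeas : MeasurableSet A)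
    (hμu : μ Set.univ = 1) (hμA : μ A = 1) : μ Aᶜ = 0 := by
  have h := measure_compl hAmeas (by rw [hμA]; exact ENNReal.one_ne_top)
  rw [h, hμu, hμA, tsub_self]

lemma ae_mem {μ : Measure Plane} {A : Set Plane} (hAmeas : MeasurableSet A)
    (hμu : μ Set.univ = 1) (hμA : μ A = 1) : ∀ᵐ a ∂μ, a ∈ A := by
  rw [Filter.eventually_iff, mem_ae_iff]
  simpa using compl_null hAmeas hμu hμA

lemma map_mem_UD {R J : Type*} [Fintype R]
    {A : Set Plane} (hAmeas : MeasurableSet A)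
    {A' : R → Set Plane} (hA'meas : ∀ r, MeasurableSet (A' r))
    (hA'disj : Pairwise (Function.onFun Disjoint A'))
    (hA'union : (⋃ r, A' r) = A)
    {Ξ' : R → Set Plane} (hΞ'fin : ∀ r, (Ξ' r).Finite) (hΞ'sub : ∀ r, Ξ' r ⊆ A' r)
    (Rj : J → Set R) (lam : J → ℝ)
    {T : Plane → Plane} (hTm : Measurable T)
    (hT : ∀ r, ∀ a ∈ A' r, T a ∈ Ξ' r)
    {μ : Measure Plane} (hμ : μ ∈ UC A A' Rj lam) :
    μ.map T ∈ UD A A' Rj lam Ξ' := by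
  obtain ⟨hμu, hμA, hμj⟩ := hμ
  have hcompl : μ Aᶜ = 0 := compl_null hAmeas hμu hμA
  have hTΞ : ∀ a ∈ A, T a ∈ XiSet Ξ' := by
    intro a ha
    rw [← hA'union] at ha
    obtain ⟨r, har⟩ := Set.mem_iUnion.1 ha
    exact Set.mem_iUnion.2 ⟨r, hT r a har⟩
  have hΞA : XiSet Ξ' ⊆ A := by
    rw [← hA'union]
    exact Set.iUnion_mono hΞ'sub
  have hTA : ∀ a ∈ A, T a ∈ A := fun a ha => hΞA (hTΞ a ha)
  have hΞmeas : MeasurableSet (XiSet Ξ') :=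
    (Set.finite_iUnion hΞ'fin).measurableSet
  have huniv : μ.map T Set.univ = 1 := by
    rw [Measure.map_apply hTm MeasurableSet.univ, Set.preimage_univ, hμu]
  have hsetone : ∀ s : Set Plane, MeasurableSet s → (∀ a ∈ A, T a ∈ s) →
      μ.map T s = 1 := by
    intro s hs hsub
    rw [Measure.map_apply hTm hs]
    refine le_antisymm ?_ ?_
    · calc μ (T ⁻¹' s) ≤ μ Set.univ := measure_mono (Set.subset_univ _)
        _ = 1 := hμu
    · calc (1:ENNReal) = μ A := hμA.symm
        _ ≤ μ (T ⁻¹' s) := measure_mono fun a ha => hsub a ha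
  refine ⟨⟨huniv, hsetone A hAmeas hTA, ?_⟩, hsetone _ hΞmeas hTΞ⟩
  intro j
  have hUmeas : MeasurableSet (uncRegion A' Rj j) :=
    MeasurableSet.biUnion (Set.to_countable _) fun r _ => hA'meas r
  rw [Measure.map_apply hTm hUmeas]
  have hkey : T ⁻¹' (uncRegion A' Rj j) ∩ A = uncRegion A' Rj j ∩ A := by
    ext a
    simp only [Set.mem_inter_iff, Set.mem_preimage]
    constructor
    · rintro ⟨hTa, ha⟩
      refine ⟨?_, ha⟩
      have ha' := ha
      rw [← hA'union] at ha'
      obtain ⟨r₀, har₀⟩ := Set.mem_iUnion.1 ha'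
      obtain ⟨r', hr', hTar'⟩ := Set.mem_iUnion₂.1 hTa
      have hTr₀ : T a ∈ A' r₀ := hΞ'sub r₀ (hT r₀ a har₀)
      have heq : r' = r₀ := by
        by_contra hne
        exact Set.disjoint_left.1 (hA'disj hne) hTar' hTr₀
      exact Set.mem_iUnion₂.2 ⟨r₀, heq ▸ hr', har₀⟩
    · rintro ⟨hUa, ha⟩
      refine ⟨?_, ha⟩
      obtain ⟨r', hr', har'⟩ := Set.mem_iUnion₂.1 hUa
      exact Set.mem_iUnion₂.2 ⟨r', hr', hΞ'sub r' (hT r' a har')⟩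
  calc μ (T ⁻¹' (uncRegion A' Rj j)) = μ (T ⁻¹' (uncRegion A' Rj j) ∩ A) :=
        (measure_inter_conull hcompl).symm
    _ = μ (uncRegion A' Rj j ∩ A) := by rw [hkey]
    _ = μ (uncRegion A' Rj j) := measure_inter_conull hcompl
    _ = ENNReal.ofReal (lam j) := hμj j


end DiscAux

/-- if `ℓ ≤ ε (1-β) Z_D` then the discretization error
`Δ = (Z_C - Z_D)/Z_C` satisfies `0 ≤ Δ ≤ ε`. -/
theorem discretization_error_bound
    {R J I : Type*} [Fintype R] [Fintype J] [Fintype I] [Nonempty I]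
    (β : ℝ) (hβ0 : 0 ≤ β) (hβ1 : β < 1)
    (A : Set Plane) (hAbd : Bornology.IsBounded A) (hAmeas : MeasurableSet A)
    (A' : R → Set Plane) (hA'meas : ∀ r, MeasurableSet (A' r))
    (hA'ne : ∀ r, (A' r).Nonempty) (hA'disj : Pairwise (Function.onFun Disjoint A'))
    (hA'union : (⋃ r, A' r) = A)
    (Ξ' : R → Set Plane) (hΞ'fin : ∀ r, (Ξ' r).Finite) (hΞ'ne : ∀ r, (Ξ' r).Nonempty)
    (hΞ'sub : ∀ r, Ξ' r ⊆ A' r)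
    (Rj : J → Set R)
    (lam : J → ℝ) (hlam : ∀ j, 0 ≤ lam j ∧ lam j ≤ 1)
    (c : I → Plane) (P : ℕ) (hP1 : 1 ≤ P) (hP2 : P ≤ Fintype.card I)
    (ℓ : ℝ) (hℓ0 : 0 ≤ ℓ)
    (hℓ : ∀ r, ∀ a ∈ A' r, ∃ ξ ∈ Ξ' r, ‖a - ξ‖ ≤ ℓ)
    (hUDne : (UD A A' Rj lam Ξ').Nonempty)
    (hZD : 0 < optVal β (UD A A' Rj lam Ξ') c P)
    (ε : ℝ) (hε : 0 < ε)
    (hℓε : ℓ ≤ ε * (1 - β) * optVal β (UD A A' Rj lam Ξ') c P) :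
    0 ≤ (optVal β (UC A A' Rj lam) c P - optVal β (UD A A' Rj lam Ξ') c P) /
          optVal β (UC A A' Rj lam) c P ∧
      (optVal β (UC A A' Rj lam) c P - optVal β (UD A A' Rj lam Ξ') c P) /
          optVal β (UC A A' Rj lam) c P ≤ ε := by
  have hb : (0:ℝ) < 1 - β := by linarith
  have h1β : (0:ℝ) ≤ 1 / (1 - β) := by positivity
  obtain ⟨T, hTm, hT⟩ := DiscAux.exists_T A' hA'meas hA'disj Ξ' hΞ'fin ℓ hℓ
  have hΞA : XiSet Ξ' ⊆ A := by
    rw [← hA'union]; exact Set.iUnion_mono hΞ'sub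
  have hTA : ∀ a ∈ A, T a ∈ A := by
    intro a ha
    rw [← hA'union] at ha
    obtain ⟨r, har⟩ := Set.mem_iUnion.1 ha
    exact hΞA (Set.mem_iUnion.2 ⟨r, (hT r a har).1⟩)
  have hTd : ∀ a ∈ A, ‖a - T a‖ ≤ ℓ := by
    intro a ha
    rw [← hA'union] at ha
    obtain ⟨r, har⟩ := Set.mem_iUnion.1 ha
    exact (hT r a har).2
  have hUDC : UD A A' Rj lam Ξ' ⊆ UC A A' Rj lam := fun μ hμ => hμ.1
  have hae : ∀ μ ∈ UC A A' Rj lam, ∀ᵐ a ∂μ, a ∈ A := fun μ hμ =>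
    DiscAux.ae_mem hAmeas hμ.1 hμ.2.1
  obtain ⟨C0, hC0⟩ := isBounded_iff_forall_norm_le.1 hAbd
  -- key per-deployment facts
  have key : ∀ y : Finset I, y.card = P →
      0 ≤ worstCVaR β (UD A A' Rj lam Ξ') (distToDeployment c y) ∧
      worstCVaR β (UD A A' Rj lam Ξ') (distToDeployment c y) ≤
        worstCVaR β (UC A A' Rj lam) (distToDeployment c y) ∧
      worstCVaR β (UC A A' Rj lam) (distToDeployment c y) ≤
        worstCVaR β (UD A A' Rj lam Ξ') (distToDeployment c y) + (1 / (1 - β)) * ℓ := by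
    intro y hcard
    have hyne : y.Nonempty := Finset.card_pos.1 (by rw [hcard]; exact hP1)
    obtain ⟨i₀, hi₀⟩ := hyne
    set f := distToDeployment c y with hfdef
    have hf0 : ∀ x, 0 ≤ f x := DiscAux.dist_nonneg' c y
    have hfl : ∀ x z, f x ≤ f z + ‖x - z‖ := DiscAux.dist_lip' c ⟨i₀, hi₀⟩
    have hfc : Continuous f := DiscAux.dist_continuous' c ⟨i₀, hi₀⟩
    set M : ℝ := max (C0 + ‖c i₀‖) 0 with hMdef
    have hM0 : 0 ≤ M := le_max_right _ _
    have hfM : ∀ x ∈ A, f x ≤ M := by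
      intro x hx
      calc f x ≤ ‖x - c i₀‖ := DiscAux.dist_le' c hi₀ x
        _ ≤ ‖x‖ + ‖c i₀‖ := norm_sub_le _ _
        _ ≤ C0 + ‖c i₀‖ := by linarith [hC0 x hx]
        _ ≤ M := le_max_left _ _
    have hsub : {w : ℝ | ∃ μ ∈ UD A A' Rj lam Ξ', w = cvar β μ f} ⊆
        {w : ℝ | ∃ μ ∈ UC A A' Rj lam, w = cvar β μ f} := by
      rintro w ⟨μ, hμ, rfl⟩
      exact ⟨μ, hUDC hμ, rfl⟩
    obtain ⟨μ₀, hμ₀⟩ := hUDne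
    have hSDne : {w : ℝ | ∃ μ ∈ UD A A' Rj lam Ξ', w = cvar β μ f}.Nonempty :=
      ⟨_, μ₀, hμ₀, rfl⟩
    have hbnd : ∀ w ∈ {w : ℝ | ∃ μ ∈ UC A A' Rj lam, w = cvar β μ f},
        w ≤ (1 / (1 - β)) * M := by
      rintro w ⟨μ, hμ, rfl⟩
      exact DiscAux.cvar_le_bound hμ.1 (hae μ hμ) hfc hf0 hM0 hfM hβ1
    have hSCbb : BddAbove {w : ℝ | ∃ μ ∈ UC A A' Rj lam, w = cvar β μ f} := ⟨_, hbnd⟩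
    have hSDbb : BddAbove {w : ℝ | ∃ μ ∈ UD A A' Rj lam Ξ', w = cvar β μ f} :=
      hSCbb.mono hsub
    refine ⟨?_, ?_, ?_⟩
    · calc (0:ℝ) ≤ cvar β μ₀ f := DiscAux.cvar_nonneg hβ1 μ₀ f
        _ ≤ _ := le_csSup hSDbb ⟨μ₀, hμ₀, rfl⟩
    · exact csSup_le_csSup hSCbb hSDne hsub
    · refine csSup_le (hSDne.mono hsub) ?_
      rintro w ⟨μ, hμ, rfl⟩
      have h1 : cvar β μ f ≤ cvar β (μ.map T) f + (1 / (1 - β)) * ℓ :=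
        DiscAux.cvar_map_le hμ.1 (hae μ hμ) hTm hTA hℓ0 hTd hfc hf0 hfl hM0 hfM hβ1
      have hmem : μ.map T ∈ UD A A' Rj lam Ξ' :=
        DiscAux.map_mem_UD hAmeas hA'meas hA'disj hA'union hΞ'fin hΞ'sub Rj lam hTm
          (fun r a ha => (hT r a ha).1) hμ
      have h2 : cvar β (μ.map T) f ≤ worstCVaR β (UD A A' Rj lam Ξ') f :=
        le_csSup hSDbb ⟨μ.map T, hmem, rfl⟩
      calc cvar β μ f ≤ cvar β (μ.map T) f + (1 / (1 - β)) * ℓ := h1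
        _ ≤ _ := by linarith
  -- optVal comparisons
  obtain ⟨y₀, -, hy₀⟩ := Finset.exists_subset_card_eq
    (n := P) (s := (Finset.univ : Finset I)) (by simpa using hP2)
  have hVDne : {v : ℝ | ∃ y : Finset I, y.card = P ∧
      v = worstCVaR β (UD A A' Rj lam Ξ') (distToDeployment c y)}.Nonempty :=
    ⟨_, y₀, hy₀, rfl⟩
  have hVCne : {v : ℝ | ∃ y : Finset I, y.card = P ∧
      v = worstCVaR β (UC A A' Rj lam) (distToDeployment c y)}.Nonempty :=
    ⟨_, y₀, hy₀, rfl⟩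
  have hVD0 : ∀ v ∈ {v : ℝ | ∃ y : Finset I, y.card = P ∧
      v = worstCVaR β (UD A A' Rj lam Ξ') (distToDeployment c y)}, (0:ℝ) ≤ v := by
    rintro v ⟨y, hc, rfl⟩
    exact (key y hc).1
  have hVC0 : ∀ v ∈ {v : ℝ | ∃ y : Finset I, y.card = P ∧
      v = worstCVaR β (UC A A' Rj lam) (distToDeployment c y)}, (0:ℝ) ≤ v := by
    rintro v ⟨y, hc, rfl⟩
    exact le_trans (key y hc).1 (key y hc).2.1
  have h_DC : optVal β (UD A A' Rj lam Ξ') c P ≤ optVal β (UC A A' Rj lam) c P := by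
    refine le_csInf hVCne ?_
    rintro v ⟨y, hc, rfl⟩
    calc optVal β (UD A A' Rj lam Ξ') c P
        ≤ worstCVaR β (UD A A' Rj lam Ξ') (distToDeployment c y) :=
          csInf_le ⟨0, hVD0⟩ ⟨y, hc, rfl⟩
      _ ≤ _ := (key y hc).2.1
  have h_CD : optVal β (UC A A' Rj lam) c P ≤
      optVal β (UD A A' Rj lam Ξ') c P + (1 / (1 - β)) * ℓ := by
    rw [← sub_le_iff_le_add]
    refine le_csInf hVDne ?_
    rintro v ⟨y, hc, rfl⟩
    rw [sub_le_iff_le_add]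
    calc optVal β (UC A A' Rj lam) c P
        ≤ worstCVaR β (UC A A' Rj lam) (distToDeployment c y) :=
          csInf_le ⟨0, hVC0⟩ ⟨y, hc, rfl⟩
      _ ≤ _ := (key y hc).2.2
  set ZD := optVal β (UD A A' Rj lam Ξ') c P
  set ZC := optVal β (UC A A' Rj lam) c P
  have hZC : 0 < ZC := lt_of_lt_of_le hZD h_DC
  have hcl : (1 / (1 - β)) * ℓ ≤ ε * ZD := by
    calc (1 / (1 - β)) * ℓ ≤ (1 / (1 - β)) * (ε * (1 - β) * ZD) :=
          mul_le_mul_of_nonneg_left hℓε h1β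
      _ = ε * ZD := by field_simp
  constructor
  · exact div_nonneg (by linarith) hZC.le
  · rw [div_le_iff₀ hZC]
    have hED : ε * ZD ≤ ε * ZC := mul_le_mul_of_nonneg_left h_DC hε.le
    linarith
end

section
/- Assume β ∈ [0,1) and that U_D is nonempty. Then Z_D ≤ Z_C ≤ Z_D + ℓ/(1−β). -/
open MeasureTheory

section AuxLemmas

/-- select first point in the list within distance ℓ (last point as fallback) -/
noncomputable def selList (ℓ : ℝ) : List Plane → Plane → Plane
  | [], _ => 0
  | [ξ], _ => ξ
  | ξ :: ζ :: L, a => if ‖a - ξ‖ ≤ ℓ then ξ else selList ℓ (ζ :: L) a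

lemma selList_mem (ℓ : ℝ) (L : List Plane) (hL : L ≠ []) (a : Plane) : selList ℓ L a ∈ L := by
  induction L with
  | nil => exact absurd rfl hL
  | cons ξ L ih =>
    rcases L with _ | ⟨ζ, L⟩
    · simp [selList]
    · by_cases h : ‖a - ξ‖ ≤ ℓ
      · simp [selList, h]
      · simp only [selList, h, if_false]
        exact List.mem_cons_of_mem _ (ih (by simp))

lemma selList_dist (ℓ : ℝ) (L : List Plane) (a : Plane) (h : ∃ ξ ∈ L, ‖a - ξ‖ ≤ ℓ) :
    ‖a - selList ℓ L a‖ ≤ ℓ := by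
  induction L with
  | nil => simp at h
  | cons ξ L ih =>
    rcases L with _ | ⟨ζ, L⟩
    · obtain ⟨ζ', hζ', hd⟩ := h
      simp only [List.mem_singleton] at hζ'
      subst hζ'
      simpa [selList] using hd
    · by_cases hξ : ‖a - ξ‖ ≤ ℓ
      · simpa [selList, hξ] using hξ
      · simp only [selList, hξ, if_false]
        apply ih
        obtain ⟨ζ', hζ', hd⟩ := h
        rcases List.mem_cons.mp hζ' with rfl | hmem
        · exact absurd hd hξ
        · exact ⟨ζ', hmem, hd⟩

lemma selList_measurable (ℓ : ℝ) (L : List Plane) : Measurable (selList ℓ L) := by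
  induction L with
  | nil => exact measurable_const
  | cons ξ L ih =>
    rcases L with _ | ⟨ζ, L⟩
    · exact measurable_const
    · have hs : MeasurableSet {a : Plane | ‖a - ξ‖ ≤ ℓ} :=
        (isClosed_le ((continuous_id.sub continuous_const).norm) continuous_const).measurableSet
      exact Measurable.ite hs measurable_const ih

open Classical in
/-- piecewise map over regions indexed by a list -/
noncomputable def regSel {R : Type*} (A' : R → Set Plane) (g : R → Plane → Plane) (d : Plane) :
    List R → Plane → Plane
  | [], _ => d
  | r :: L, a => if a ∈ A' r then g r a else regSel A' g d L a

lemma regSel_spec {R : Type*} (A' : R → Set Plane) (g : R → Plane → Plane) (d : Plane)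
    (L : List R) (r : R) (hr : r ∈ L) (a : Plane) (ha : a ∈ A' r)
    (huniq : ∀ r' ∈ L, a ∈ A' r' → r' = r) :
    regSel A' g d L a = g r a := by
  induction L with
  | nil => simp at hr
  | cons r' L ih =>
    by_cases h : a ∈ A' r'
    · have : r' = r := huniq r' List.mem_cons_self h
      subst this
      simp [regSel, h]
    · have hrL : r ∈ L := by
        rcases List.mem_cons.mp hr with rfl | hm
        · exact absurd ha h
        · exact hm
      simp only [regSel, h, if_false]
      exact ih hrL fun r'' h1 h2 => huniq r'' (List.mem_cons_of_mem _ h1) h2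

lemma regSel_measurable {R : Type*} (A' : R → Set Plane) (hA' : ∀ r, MeasurableSet (A' r))
    (g : R → Plane → Plane) (hg : ∀ r, Measurable (g r)) (d : Plane) (L : List R) :
    Measurable (regSel A' g d L) := by
  induction L with
  | nil => exact measurable_const
  | cons r L ih => exact Measurable.ite (hA' r) (hg r) ih

lemma dtd_nonneg {I : Type*} (c : I → Plane) (y : Finset I) (x : Plane) :
    0 ≤ distToDeployment c y x :=
  Real.iInf_nonneg fun _ => norm_nonneg _

lemma dtd_le {I : Type*} (c : I → Plane) (y : Finset I) (x : Plane) {i : I} (hi : i ∈ y) :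
    distToDeployment c y x ≤ ‖x - c i‖ :=
  ciInf_le ⟨0, by rintro v ⟨j, rfl⟩; exact norm_nonneg _⟩ (⟨i, hi⟩ : y)

lemma dtd_tri {I : Type*} (c : I → Plane) (y : Finset I) (hy : y.Nonempty) (x z : Plane) :
    distToDeployment c y x ≤ distToDeployment c y z + ‖x - z‖ := by
  haveI := hy.to_subtype
  have h : distToDeployment c y x - ‖x - z‖ ≤ ⨅ i : y, ‖z - c i.1‖ := by
    apply le_ciInf
    intro i
    have h1 : distToDeployment c y x ≤ ‖x - c i.1‖ := dtd_le c y x i.2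
    have h2 : ‖x - c i.1‖ ≤ ‖x - z‖ + ‖z - c i.1‖ := by
      calc ‖x - c i.1‖ = ‖(x - z) + (z - c i.1)‖ := by rw [sub_add_sub_cancel]
        _ ≤ ‖x - z‖ + ‖z - c i.1‖ := norm_add_le _ _
    linarith
  have hz : (⨅ i : y, ‖z - c i.1‖) = distToDeployment c y z := rfl
  rw [hz] at h
  linarith

lemma dtd_cont {I : Type*} (c : I → Plane) (y : Finset I) (hy : y.Nonempty) :
    Continuous (distToDeployment c y) := by
  have : LipschitzWith 1 (distToDeployment c y) := by
    apply LipschitzWith.of_dist_le_mul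
    intro x z
    rw [NNReal.coe_one, one_mul, Real.dist_eq, abs_sub_le_iff]
    have h1 := dtd_tri c y hy x z
    have h2 := dtd_tri c y hy z x
    rw [dist_eq_norm]
    constructor
    · linarith
    · rw [norm_sub_rev] at h2; linarith
  exact this.continuous

lemma cvar_set_lb (β : ℝ) (hβ1 : β < 1) (μ : Measure Plane) (f : Plane → ℝ) :
    ∀ v ∈ {v : ℝ | ∃ α : ℝ, 0 ≤ α ∧ v = α + (1 / (1 - β)) * ∫ x, max (f x - α) 0 ∂μ},
      (0:ℝ) ≤ v := by
  rintro v ⟨α, hα, rfl⟩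
  have hc' : (0:ℝ) < 1 - β := by linarith
  have hc : (0:ℝ) ≤ 1 / (1 - β) := by positivity
  have hi : 0 ≤ ∫ x, max (f x - α) 0 ∂μ := integral_nonneg fun x => le_max_right _ _
  positivity

lemma cvar_nonneg (β : ℝ) (hβ1 : β < 1) (μ : Measure Plane) (f : Plane → ℝ) :
    0 ≤ cvar β μ f :=
  Real.sInf_nonneg (cvar_set_lb β hβ1 μ f)

lemma max_integrable (μ : Measure Plane) [IsProbabilityMeasure μ]
    (g : Plane → ℝ) (hg : Measurable g) (A : Set Plane) (hAe : ∀ᵐ x ∂μ, x ∈ A)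
    (M : ℝ) (hM : ∀ x ∈ A, g x ≤ M) (α : ℝ) :
    Integrable (fun x => max (g x - α) 0) μ := by
  refine Integrable.mono' (integrable_const (max (M - α) 0))
    (((hg.sub measurable_const).max measurable_const).aestronglyMeasurable) ?_
  filter_upwards [hAe] with x hx
  rw [Real.norm_eq_abs, abs_of_nonneg (le_max_right _ _)]
  exact max_le_max (by linarith [hM x hx]) le_rfl

lemma cvar_le_div (β : ℝ) (hβ1 : β < 1) (μ : Measure Plane) [IsProbabilityMeasure μ]
    (f : Plane → ℝ) (hfm : Measurable f)
    (A : Set Plane) (hAe : ∀ᵐ x ∂μ, x ∈ A) (M : ℝ) (hM0 : 0 ≤ M) (hM : ∀ x ∈ A, f x ≤ M) :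
    cvar β μ f ≤ M / (1 - β) := by
  have hc : (0:ℝ) < 1 - β := by linarith
  have h0 : cvar β μ f ≤ 0 + (1 / (1 - β)) * ∫ x, max (f x - 0) 0 ∂μ :=
    csInf_le ⟨0, cvar_set_lb β hβ1 μ f⟩ ⟨0, le_rfl, rfl⟩
  have hI : ∫ x, max (f x - 0) 0 ∂μ ≤ M := by
    calc ∫ x, max (f x - 0) 0 ∂μ ≤ ∫ _x, M ∂μ := by
          apply integral_mono_ae (max_integrable μ f hfm A hAe M hM 0) (integrable_const M)
          filter_upwards [hAe] with x hx
          exact max_le (by linarith [hM x hx]) hM0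
      _ = M := by simp
  have := mul_le_mul_of_nonneg_left hI (by positivity : (0:ℝ) ≤ 1 / (1 - β))
  have heq : 1 / (1 - β) * M = M / (1 - β) := one_div_mul_eq_div _ _
  linarith

lemma cvar_map_le (β : ℝ) (hβ1 : β < 1) (μ : Measure Plane) [IsProbabilityMeasure μ]
    (f : Plane → ℝ) (hfc : Continuous f)
    (T : Plane → Plane) (hT : Measurable T)
    (A : Set Plane) (hAe : ∀ᵐ x ∂μ, x ∈ A)
    (M : ℝ) (hM : ∀ x ∈ A, f x ≤ M) (hMT : ∀ x ∈ A, f (T x) ≤ M)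
    (ℓ : ℝ) (hℓ0 : 0 ≤ ℓ) (hTd : ∀ x ∈ A, f x ≤ f (T x) + ℓ) :
    cvar β μ f ≤ cvar β (μ.map T) f + ℓ / (1 - β) := by
  have hc : (0:ℝ) < 1 - β := by linarith
  have hc' : (0:ℝ) ≤ 1 / (1 - β) := by positivity
  set ν := μ.map T with hν
  have hSν : {v : ℝ | ∃ α : ℝ, 0 ≤ α ∧
      v = α + (1 / (1 - β)) * ∫ x, max (f x - α) 0 ∂ν}.Nonempty :=
    ⟨_, 0, le_rfl, rfl⟩
  have hmain : ∀ v ∈ {v : ℝ | ∃ α : ℝ, 0 ≤ α ∧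
      v = α + (1 / (1 - β)) * ∫ x, max (f x - α) 0 ∂ν},
      cvar β μ f - ℓ / (1 - β) ≤ v := by
    rintro v ⟨α, hα, rfl⟩
    have h1 : cvar β μ f ≤ α + (1 / (1 - β)) * ∫ x, max (f x - α) 0 ∂μ :=
      csInf_le ⟨0, cvar_set_lb β hβ1 μ f⟩ ⟨α, hα, rfl⟩
    have hI2 : Integrable (fun x => max (f (T x) - α) 0) μ :=
      max_integrable μ (fun x => f (T x)) (hfc.measurable.comp hT) A hAe M hMT α
    have h3 : ∫ x, max (f x - α) 0 ∂ν = ∫ x, max (f (T x) - α) 0 ∂μ := by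
      rw [hν]
      exact integral_map hT.aemeasurable
        (((hfc.sub continuous_const).max continuous_const).aestronglyMeasurable)
    have h2 : ∫ x, max (f x - α) 0 ∂μ ≤ (∫ x, max (f (T x) - α) 0 ∂μ) + ℓ := by
      have hle : ∫ x, max (f x - α) 0 ∂μ ≤ ∫ x, (max (f (T x) - α) 0 + ℓ) ∂μ := by
        apply integral_mono_ae (max_integrable μ f hfc.measurable A hAe M hM α)
          (hI2.add (integrable_const ℓ))
        filter_upwards [hAe] with x hx
        simp only [Pi.add_apply]
        refine max_le ?_ ?_
        · have := hTd x hx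
          have := le_max_left (f (T x) - α) 0
          linarith
        · have := le_max_right (f (T x) - α) 0
          linarith
      rwa [integral_add hI2 (integrable_const ℓ), integral_const, probReal_univ,
        one_smul] at hle
    have h4 := mul_le_mul_of_nonneg_left h2 hc'
    have h5 : 1 / (1 - β) * ((∫ x, max (f (T x) - α) 0 ∂μ) + ℓ)
        = 1 / (1 - β) * (∫ x, max (f (T x) - α) 0 ∂μ) + ℓ / (1 - β) := by
      ring
    rw [h3]
    linarith
  have hfin := le_csInf hSν hmain
  have hcv : cvar β ν f = sInf {v : ℝ | ∃ α : ℝ, 0 ≤ α ∧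
      v = α + (1 / (1 - β)) * ∫ x, max (f x - α) 0 ∂ν} := rfl
  linarith [hcv ▸ hfin]

end AuxLemmas

/-- `Z_D ≤ Z_C ≤ Z_D + ℓ/(1-β)`. -/
theorem ZD_le_ZC_le_ZD_add
    {R J I : Type*} [Fintype R] [Fintype J] [Fintype I] [Nonempty I]
    (β : ℝ) (hβ0 : 0 ≤ β) (hβ1 : β < 1)
    (A : Set Plane) (hAbd : Bornology.IsBounded A) (hAmeas : MeasurableSet A)
    (A' : R → Set Plane) (hA'meas : ∀ r, MeasurableSet (A' r))
    (hA'ne : ∀ r, (A' r).Nonempty) (hA'disj : Pairwise (Function.onFun Disjoint A'))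
    (hA'union : (⋃ r, A' r) = A)
    (Ξ' : R → Set Plane) (hΞ'fin : ∀ r, (Ξ' r).Finite) (hΞ'ne : ∀ r, (Ξ' r).Nonempty)
    (hΞ'sub : ∀ r, Ξ' r ⊆ A' r)
    (Rj : J → Set R)
    (lam : J → ℝ) (hlam : ∀ j, 0 ≤ lam j ∧ lam j ≤ 1)
    (c : I → Plane) (P : ℕ) (hP1 : 1 ≤ P) (hP2 : P ≤ Fintype.card I)
    (ℓ : ℝ) (hℓ0 : 0 ≤ ℓ)
    (hℓ : ∀ r, ∀ a ∈ A' r, ∃ ξ ∈ Ξ' r, ‖a - ξ‖ ≤ ℓ)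
    (hUDne : (UD A A' Rj lam Ξ').Nonempty) :
    optVal β (UD A A' Rj lam Ξ') c P ≤ optVal β (UC A A' Rj lam) c P ∧
      optVal β (UC A A' Rj lam) c P ≤ optVal β (UD A A' Rj lam Ξ') c P + ℓ / (1 - β) := by
  classical
  have hc : (0:ℝ) < 1 - β := by linarith
  have hk0 : 0 ≤ ℓ / (1 - β) := by positivity
  haveI hRne : Nonempty R := by
    by_contra h
    rw [not_nonempty_iff] at h
    obtain ⟨μ₀, hμ₀⟩ := hUDne
    have h2 := hμ₀.2
    rw [XiSet, Set.iUnion_of_empty] at h2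
    simp at h2
  obtain ⟨r₀⟩ := hRne
  obtain ⟨ξ₀, hξ₀⟩ := hΞ'ne r₀
  obtain ⟨CB, hCB⟩ := hAbd.exists_norm_le
  have huniq : ∀ {r r' : R} {a : Plane}, a ∈ A' r → a ∈ A' r' → r = r' := by
    intro r r' a h h'
    by_contra hne
    exact Set.disjoint_left.mp (hA'disj hne) h h'
  set g : R → Plane → Plane := fun r => selList ℓ (hΞ'fin r).toFinset.toList with hgdef
  set T : Plane → Plane := regSel A' g ξ₀ (Finset.univ.toList) with hTdef
  have hT : Measurable T :=
    regSel_measurable A' hA'meas g (fun r => selList_measurable _ _) ξ₀ _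
  have hTspec : ∀ r, ∀ a ∈ A' r, T a ∈ Ξ' r ∧ ‖a - T a‖ ≤ ℓ := by
    intro r a ha
    have hrl : r ∈ (Finset.univ : Finset R).toList := by simp
    have hu : ∀ r' ∈ (Finset.univ : Finset R).toList, a ∈ A' r' → r' = r :=
      fun r' _ h' => huniq h' ha
    have heq : T a = g r a := regSel_spec A' g ξ₀ _ r hrl a ha hu
    have hLne : (hΞ'fin r).toFinset.toList ≠ [] := by
      simp [Finset.toList_eq_nil, Set.Finite.toFinset_eq_empty, (hΞ'ne r).ne_empty]
    have hmemL : ∀ ξ, ξ ∈ (hΞ'fin r).toFinset.toList ↔ ξ ∈ Ξ' r := by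
      intro ξ; rw [Finset.mem_toList, Set.Finite.mem_toFinset]
    constructor
    · rw [heq, hgdef]
      exact (hmemL _).mp (selList_mem ℓ _ hLne a)
    · rw [heq, hgdef]
      apply selList_dist
      obtain ⟨ξ, hξm, hξd⟩ := hℓ r a ha
      exact ⟨ξ, (hmemL ξ).mpr hξm, hξd⟩
  have hmemA : ∀ a ∈ A, ∃ r, a ∈ A' r := by
    intro a ha; rw [← hA'union] at ha; exact Set.mem_iUnion.mp ha
  have hTA : ∀ a ∈ A, T a ∈ A := by
    intro a ha
    obtain ⟨r, hr⟩ := hmemA a ha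
    rw [← hA'union]
    exact Set.mem_iUnion.mpr ⟨r, hΞ'sub r (hTspec r a hr).1⟩
  have hΞmeas : MeasurableSet (XiSet Ξ') :=
    MeasurableSet.iUnion fun r => (hΞ'fin r).measurableSet
  have hAjmeas : ∀ j, MeasurableSet (uncRegion A' Rj j) := fun j =>
    MeasurableSet.biUnion (Set.to_countable _) fun r _ => hA'meas r
  have hAc : ∀ μ ∈ UC A A' Rj lam, μ Aᶜ = 0 := by
    rintro μ ⟨hμ1, hμA, -⟩
    have hcompl := measure_compl hAmeas (by rw [hμA]; exact ENNReal.one_ne_top)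
    rw [hμ1, hμA] at hcompl
    simpa using hcompl
  have hx₀A : ξ₀ ∈ A := by
    rw [← hA'union]; exact Set.mem_iUnion.mpr ⟨r₀, hΞ'sub r₀ hξ₀⟩
  -- the pushforward lands in UD
  have hmap : ∀ μ ∈ UC A A' Rj lam, μ.map T ∈ UD A A' Rj lam Ξ' := by
    intro μ hμUC
    obtain ⟨hμ1, hμA, hμj⟩ := hμUC
    have hAc' : μ Aᶜ = 0 := hAc μ ⟨hμ1, hμA, hμj⟩
    have hSA : ∀ S : Set Plane, μ S = μ (S ∩ A) := by
      intro S
      refine le_antisymm ?_ (measure_mono Set.inter_subset_left)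
      calc μ S ≤ μ ((S ∩ A) ∪ Aᶜ) := measure_mono (fun x hx => by
            by_cases hxA : x ∈ A
            · exact Or.inl ⟨hx, hxA⟩
            · exact Or.inr hxA)
        _ ≤ μ (S ∩ A) + μ Aᶜ := measure_union_le _ _
        _ = μ (S ∩ A) := by rw [hAc', add_zero]
    have hmA : μ.map T A = 1 := by
      rw [Measure.map_apply hT hAmeas]
      refine le_antisymm ?_ ?_
      · rw [← hμ1]; exact measure_mono (Set.subset_univ _)
      · rw [← hμA]; exact measure_mono (fun a ha => hTA a ha)
    refine ⟨⟨?_, hmA, ?_⟩, ?_⟩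
    · rw [Measure.map_apply hT MeasurableSet.univ, Set.preimage_univ, hμ1]
    · intro j
      rw [Measure.map_apply hT (hAjmeas j)]
      have hsame : T ⁻¹' (uncRegion A' Rj j) ∩ A = uncRegion A' Rj j ∩ A := by
        ext a
        simp only [Set.mem_inter_iff, Set.mem_preimage, uncRegion, Set.mem_iUnion]
        constructor
        · rintro ⟨⟨r', hr'j, hTr'⟩, haA⟩
          refine ⟨?_, haA⟩
          obtain ⟨r, hr⟩ := hmemA a haA
          have hTr : T a ∈ A' r := hΞ'sub r (hTspec r a hr).1
          have hrr : r' = r := huniq hTr' hTr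
          subst hrr
          exact ⟨r', hr'j, hr⟩
        · rintro ⟨⟨r', hr'j, hr'⟩, haA⟩
          exact ⟨⟨r', hr'j, hΞ'sub r' (hTspec r' a hr').1⟩, haA⟩
      rw [hSA (T ⁻¹' (uncRegion A' Rj j)), hsame, ← hSA (uncRegion A' Rj j), hμj j]
    · rw [Measure.map_apply hT hΞmeas]
      have hsub : A ⊆ T ⁻¹' (XiSet Ξ') := by
        intro a ha
        obtain ⟨r, hr⟩ := hmemA a ha
        exact Set.mem_iUnion.mpr ⟨r, (hTspec r a hr).1⟩
      refine le_antisymm ?_ ?_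
      · rw [← hμ1]; exact measure_mono (Set.subset_univ _)
      · rw [← hμA]; exact measure_mono hsub
  -- per-deployment comparison
  have key : ∀ y : Finset I, y.card = P →
      worstCVaR β (UD A A' Rj lam Ξ') (distToDeployment c y) ≤
        worstCVaR β (UC A A' Rj lam) (distToDeployment c y) ∧
      worstCVaR β (UC A A' Rj lam) (distToDeployment c y) ≤
        worstCVaR β (UD A A' Rj lam Ξ') (distToDeployment c y) + ℓ / (1 - β) := by
    intro y hy
    have hyne : y.Nonempty := Finset.card_pos.mp (by rw [hy]; exact hP1)
    obtain ⟨i₀, hi₀⟩ := hyne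
    have hyne : y.Nonempty := ⟨i₀, hi₀⟩
    set f := distToDeployment c y with hfdef
    set M := CB + ‖c i₀‖ with hMdef
    have hM : ∀ x ∈ A, f x ≤ M := by
      intro x hx
      calc f x ≤ ‖x - c i₀‖ := dtd_le c y x hi₀
        _ ≤ ‖x‖ + ‖c i₀‖ := norm_sub_le _ _
        _ ≤ CB + ‖c i₀‖ := by linarith [hCB x hx]
    have hM0 : 0 ≤ M := le_trans (dtd_nonneg c y ξ₀) (hM ξ₀ hx₀A)
    have hfc : Continuous f := dtd_cont c y hyne
    have hDsubC : UD A A' Rj lam Ξ' ⊆ UC A A' Rj lam := fun μ hμ => hμ.1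
    have hDC : {w : ℝ | ∃ μ ∈ UD A A' Rj lam Ξ', w = cvar β μ f} ⊆
        {w : ℝ | ∃ μ ∈ UC A A' Rj lam, w = cvar β μ f} := by
      rintro w ⟨μ, hμ, rfl⟩; exact ⟨μ, hDsubC hμ, rfl⟩
    have hDne : {w : ℝ | ∃ μ ∈ UD A A' Rj lam Ξ', w = cvar β μ f}.Nonempty := by
      obtain ⟨μ, hμ⟩ := hUDne; exact ⟨_, μ, hμ, rfl⟩
    have hCne : {w : ℝ | ∃ μ ∈ UC A A' Rj lam, w = cvar β μ f}.Nonempty := hDne.mono hDC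
    have hub : ∀ w ∈ {w : ℝ | ∃ μ ∈ UC A A' Rj lam, w = cvar β μ f}, w ≤ M / (1 - β) := by
      rintro w ⟨μ, hμ, rfl⟩
      haveI : IsProbabilityMeasure μ := ⟨hμ.1⟩
      have hAe : ∀ᵐ x ∂μ, x ∈ A := by
        rw [MeasureTheory.ae_iff]
        exact hAc μ hμ
      exact cvar_le_div β hβ1 μ f hfc.measurable A hAe M hM0 hM
    have hbddC : BddAbove {w : ℝ | ∃ μ ∈ UC A A' Rj lam, w = cvar β μ f} :=
      ⟨M / (1 - β), hub⟩
    have hbddD : BddAbove {w : ℝ | ∃ μ ∈ UD A A' Rj lam Ξ', w = cvar β μ f} :=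
      hbddC.mono hDC
    rw [worstCVaR, worstCVaR]
    constructor
    · exact csSup_le_csSup hbddC hDne hDC
    · apply csSup_le hCne
      rintro w ⟨μ, hμ, rfl⟩
      haveI : IsProbabilityMeasure μ := ⟨hμ.1⟩
      have hAe : ∀ᵐ x ∂μ, x ∈ A := by
        rw [MeasureTheory.ae_iff]
        exact hAc μ hμ
      have hMT : ∀ x ∈ A, f (T x) ≤ M := fun x hx => hM _ (hTA x hx)
      have hTd2 : ∀ x ∈ A, f x ≤ f (T x) + ℓ := by
        intro x hx
        obtain ⟨r, hr⟩ := hmemA x hx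
        have hd := (hTspec r x hr).2
        have htri := dtd_tri c y hyne x (T x)
        rw [← hfdef] at htri
        linarith
      have h1 : cvar β μ f ≤ cvar β (μ.map T) f + ℓ / (1 - β) :=
        cvar_map_le β hβ1 μ f hfc T hT A hAe M hM hMT ℓ hℓ0 hTd2
      have h2 : cvar β (μ.map T) f ≤
          sSup {w : ℝ | ∃ μ ∈ UD A A' Rj lam Ξ', w = cvar β μ f} :=
        le_csSup hbddD ⟨μ.map T, hmap μ hμ, rfl⟩
      linarith
  -- assemble
  obtain ⟨y₀, hy₀⟩ : ∃ y : Finset I, y.card = P := by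
    obtain ⟨y, -, hyc⟩ := Finset.exists_subset_card_eq
      (s := (Finset.univ : Finset I)) (by simpa using hP2)
    exact ⟨y, hyc⟩
  have hwpos : ∀ (𝒰 : Set (Measure Plane)) (f : Plane → ℝ), 0 ≤ worstCVaR β 𝒰 f := by
    intro 𝒰 f
    exact Real.sSup_nonneg (by rintro w ⟨μ, hμ, rfl⟩; exact cvar_nonneg β hβ1 μ f)
  rw [optVal, optVal]
  have hVCne : {v : ℝ | ∃ y : Finset I, y.card = P ∧
      v = worstCVaR β (UC A A' Rj lam) (distToDeployment c y)}.Nonempty := ⟨_, y₀, hy₀, rfl⟩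
  have hVDne : {v : ℝ | ∃ y : Finset I, y.card = P ∧
      v = worstCVaR β (UD A A' Rj lam Ξ') (distToDeployment c y)}.Nonempty := ⟨_, y₀, hy₀, rfl⟩
  have hbVC : BddBelow {v : ℝ | ∃ y : Finset I, y.card = P ∧
      v = worstCVaR β (UC A A' Rj lam) (distToDeployment c y)} :=
    ⟨0, by rintro v ⟨y, hyc, rfl⟩; exact hwpos _ _⟩
  have hbVD : BddBelow {v : ℝ | ∃ y : Finset I, y.card = P ∧
      v = worstCVaR β (UD A A' Rj lam Ξ') (distToDeployment c y)} :=
    ⟨0, by rintro v ⟨y, hyc, rfl⟩; exact hwpos _ _⟩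
  constructor
  · apply le_csInf hVCne
    rintro v ⟨y, hyc, rfl⟩
    exact le_trans (csInf_le hbVD ⟨y, hyc, rfl⟩) (key y hyc).1
  · rw [← sub_le_iff_le_add]
    apply le_csInf hVDne
    rintro v ⟨y, hyc, rfl⟩
    rw [sub_le_iff_le_add]
    exact le_trans (csInf_le hbVC ⟨y, hyc, rfl⟩) (key y hyc).2
end

section
/- Fix β ∈ [0,1) and a deployment y ⊆ I with |y| = P, and suppose that for each r ∈ R there is a point a_r ∈ A'_r with f_y(a) ≤ f_y(a_r) for all a ∈ A'_r. For μ ∈ U_C let μ̃ := Σ_{r∈R} μ(A'_r) δ_{a_r} be the discrete measure placing mass μ(A'_r) at the point a_r. Then μ̃ ∈ U_C and CVaR_β^μ(f_y) ≤ CVaR_β^{μ̃}(f_y). Consequently, sup_{μ ∈ U_C} CVaR_β^μ(f_y) equals the supremum of CVaR_β^μ(f_y) over the measures μ ∈ U_C supported on the finite set {a_r : r ∈ R}. -/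
open MeasureTheory

/-- for any `μ ∈ U_C`, the discrete measure `μ̃ = Σ_r μ(A'_r) δ_{a_r}`
(placing the mass of each subregion on a farthest point `a_r`) lies in `U_C` and has
CVaR at least that of `μ`; consequently, the worst-case CVaR over `U_C` equals the
worst-case CVaR over measures in `U_C` supported on the finite set `{a_r : r ∈ R}`. -/
theorem worst_case_distribution_sparse
    {R J I : Type*} [Fintype R] [Fintype J] [Fintype I] [Nonempty I]
    (β : ℝ) (hβ0 : 0 ≤ β) (hβ1 : β < 1)
    (A : Set Plane) (hAbd : Bornology.IsBounded A) (hAmeas : MeasurableSet A)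
    (A' : R → Set Plane) (hA'meas : ∀ r, MeasurableSet (A' r))
    (hA'ne : ∀ r, (A' r).Nonempty) (hA'disj : Pairwise (Function.onFun Disjoint A'))
    (hA'union : (⋃ r, A' r) = A)
    (Rj : J → Set R)
    (lam : J → ℝ) (hlam : ∀ j, 0 ≤ lam j ∧ lam j ≤ 1)
    (c : I → Plane) (P : ℕ) (hP1 : 1 ≤ P) (hP2 : P ≤ Fintype.card I)
    (y : Finset I) (hy : y.card = P)
    (a : R → Plane) (haA : ∀ r, a r ∈ A' r)
    (hamax : ∀ r, ∀ x ∈ A' r, distToDeployment c y x ≤ distToDeployment c y (a r)) :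
    (∀ μ ∈ UC A A' Rj lam,
        (∑ r : R, μ (A' r) • Measure.dirac (a r)) ∈ UC A A' Rj lam ∧
        cvar β μ (distToDeployment c y) ≤
          cvar β (∑ r : R, μ (A' r) • Measure.dirac (a r)) (distToDeployment c y)) ∧
      sSup {w : ℝ | ∃ μ ∈ UC A A' Rj lam, w = cvar β μ (distToDeployment c y)} =
        sSup {w : ℝ | ∃ μ ∈ UC A A' Rj lam,
          μ (Set.range a) = 1 ∧ w = cvar β μ (distToDeployment c y)} := by
  classical
  set f : Plane → ℝ := distToDeployment c y with hfdef
  have hyne : y.Nonempty := Finset.card_pos.mp (by rw [hy]; omega)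
  haveI : Nonempty ↥y := ⟨⟨hyne.choose, hyne.choose_spec⟩⟩
  have hbb : ∀ x : Plane, BddBelow (Set.range fun i : ↥y => ‖x - c i.1‖) := by
    intro x
    exact ⟨0, by rintro _ ⟨i, rfl⟩; positivity⟩
  have hfc : Continuous f := by
    have hfeq : f = fun x => Finset.univ.inf' Finset.univ_nonempty
        (fun i : ↥y => ‖x - c i.1‖) := by
      funext x
      rw [Finset.inf'_univ_eq_ciInf]
      rfl
    rw [hfeq]
    exact Continuous.finset_inf'_apply _
      (fun i _ => (continuous_id.sub continuous_const).norm)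
  have hf0 : ∀ x, 0 ≤ f x := fun x => le_ciInf fun i => norm_nonneg _
  have hfle : ∀ (i : ↥y) (x : Plane), f x ≤ ‖x - c i.1‖ := fun i x => ciInf_le (hbb x) i
  obtain ⟨C, hC⟩ := Bornology.IsBounded.exists_norm_le hAbd
  set i₀ : ↥y := Classical.arbitrary _ with hi₀
  set M : ℝ := max (C + ‖c i₀.1‖) 0 with hM
  have hM0 : 0 ≤ M := le_max_right _ _
  have hMA : ∀ x ∈ A, f x ≤ M := by
    intro x hx
    refine (hfle i₀ x).trans ?_
    calc ‖x - c i₀.1‖ ≤ ‖x‖ + ‖c i₀.1‖ := norm_sub_le _ _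
      _ ≤ C + ‖c i₀.1‖ := by have := hC x hx; linarith
      _ ≤ M := le_max_left _ _
  have hA'A : ∀ r, A' r ⊆ A := fun r => hA'union ▸ Set.subset_iUnion A' r
  set g : ℝ → Plane → ℝ := fun α x => max (f x - α) 0 with hg
  have hgc : ∀ α, Continuous (g α) := fun α =>
    (hfc.sub continuous_const).max continuous_const
  have hg0 : ∀ α x, 0 ≤ g α x := fun α x => le_max_right _ _
  have hgbd : ∀ α, ∀ x ∈ A, g α x ≤ max (M - α) 0 := fun α x hx =>
    max_le_max (sub_le_sub_right (hMA x hx) α) le_rfl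
  have hgmono : ∀ α r, ∀ x ∈ A' r, g α x ≤ g α (a r) := fun α r x hx =>
    max_le_max (sub_le_sub_right (hamax r x hx) α) le_rfl
  have hK : (0 : ℝ) < 1 - β := by linarith
  have hK' : (0 : ℝ) ≤ 1 / (1 - β) := by positivity
  -- facts about members of UC
  have hae : ∀ ν : Measure Plane, ν ∈ UC A A' Rj lam → ∀ᵐ x ∂ν, x ∈ A := by
    intro ν hν
    obtain ⟨hν1, hνA, -⟩ := hν
    have hcompl : ν Aᶜ = 0 := by
      rw [measure_compl hAmeas (by rw [hνA]; exact ENNReal.one_ne_top), hν1, hνA, tsub_self]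
    rw [ae_iff]
    simpa [Set.compl_def] using hcompl
  have hint : ∀ ν : Measure Plane, ν ∈ UC A A' Rj lam → ∀ α : ℝ,
      Integrable (g α) ν := by
    intro ν hν α
    haveI : IsProbabilityMeasure ν := ⟨hν.1⟩
    refine Integrable.mono' (integrable_const (max (M - α) 0))
      ((hgc α).aestronglyMeasurable) ?_
    filter_upwards [hae ν hν] with x hx
    rw [Real.norm_of_nonneg (hg0 α x)]
    exact hgbd α x hx
  -- lower bound and nonemptiness of the cvar defining set
  have hbddb : ∀ ν : Measure Plane,
      BddBelow {v : ℝ | ∃ α : ℝ, 0 ≤ α ∧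
        v = α + (1 / (1 - β)) * ∫ x, max (f x - α) 0 ∂ν} := by
    intro ν
    refine ⟨0, ?_⟩
    rintro v ⟨α, hα, rfl⟩
    have hI : 0 ≤ ∫ x, max (f x - α) 0 ∂ν := integral_nonneg fun x => le_max_right _ _
    have := mul_nonneg hK' hI
    linarith
  have hsemne : ∀ ν : Measure Plane,
      ({v : ℝ | ∃ α : ℝ, 0 ≤ α ∧
        v = α + (1 / (1 - β)) * ∫ x, max (f x - α) 0 ∂ν}).Nonempty := by
    intro ν
    exact ⟨0 + (1 / (1 - β)) * ∫ x, max (f x - 0) 0 ∂ν, 0, le_rfl, rfl⟩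
  -- the main per-measure statement
  have hmain : ∀ μ ∈ UC A A' Rj lam,
      (∑ r : R, μ (A' r) • Measure.dirac (a r)) ∈ UC A A' Rj lam ∧
      cvar β μ (distToDeployment c y) ≤
        cvar β (∑ r : R, μ (A' r) • Measure.dirac (a r)) (distToDeployment c y) := by
    intro μ hμ
    obtain ⟨hμ1, hμA, hμj⟩ := hμ
    haveI : IsProbabilityMeasure μ := ⟨hμ1⟩
    set μt : Measure Plane := ∑ r : R, μ (A' r) • Measure.dirac (a r) with hμt
    have h1 : ∑ r : R, μ (A' r) = 1 := by
      rw [← tsum_fintype (L := .unconditional _), ← measure_iUnion hA'disj hA'meas, hA'union, hμA]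
    have happly : ∀ s : Set Plane, MeasurableSet s →
        μt s = ∑ r : R, if a r ∈ s then μ (A' r) else 0 := by
      intro s hs
      rw [hμt, Measure.finset_sum_apply]
      refine Finset.sum_congr rfl fun r _ => ?_
      rw [Measure.smul_apply, Measure.dirac_apply' _ hs, smul_eq_mul,
        Set.indicator_apply]
      split_ifs <;> simp
    have hμtUC : μt ∈ UC A A' Rj lam := by
      refine ⟨?_, ?_, ?_⟩
      · rw [happly Set.univ MeasurableSet.univ]
        simpa using h1
      · rw [happly A hAmeas]
        rw [Finset.sum_congr rfl fun r _ => if_pos (hA'A r (haA r))]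
        exact h1
      · intro j
        have hUmeas : MeasurableSet (uncRegion A' Rj j) :=
          MeasurableSet.biUnion (Set.to_countable _) fun r _ => hA'meas r
        have hmem : ∀ r, a r ∈ uncRegion A' Rj j ↔ r ∈ Rj j := by
          intro r
          constructor
          · intro hmem
            rw [uncRegion, Set.mem_iUnion₂] at hmem
            obtain ⟨r', hr', har'⟩ := hmem
            have hrr : r = r' := by
              by_contra hne
              exact Set.disjoint_left.mp (hA'disj hne) (haA r) har'
            rw [hrr]; exact hr'
          · intro hr
            exact Set.mem_biUnion hr (haA r)
        have hUval : μ (uncRegion A' Rj j) =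
            ∑ r ∈ Finset.univ.filter (· ∈ Rj j), μ (A' r) := by
          have hUeq : uncRegion A' Rj j =
              ⋃ r ∈ (Finset.univ.filter (· ∈ Rj j) : Finset R), A' r := by
            rw [uncRegion]
            ext x
            simp [Finset.mem_filter]
          rw [hUeq, measure_biUnion_finset
            (fun i _ j _ hij => hA'disj hij) (fun b _ => hA'meas b)]
        calc μt (uncRegion A' Rj j)
            = ∑ r : R, if a r ∈ uncRegion A' Rj j then μ (A' r) else 0 :=
              happly _ hUmeas
          _ = ∑ r : R, if r ∈ Rj j then μ (A' r) else 0 :=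
              Finset.sum_congr rfl fun r _ => by rw [if_congr (hmem r) rfl rfl]
          _ = ∑ r ∈ Finset.univ.filter (· ∈ Rj j), μ (A' r) :=
              (Finset.sum_filter _ _).symm
          _ = μ (uncRegion A' Rj j) := hUval.symm
          _ = ENNReal.ofReal (lam j) := hμj j
      -- key integral inequality
    have hfin : ∀ r, μ (A' r) ≠ ⊤ := fun r => measure_ne_top μ _
    have hdint : ∀ (α : ℝ) (r : R), Integrable (g α) (μ (A' r) • Measure.dirac (a r)) := by
      intro α r
      refine Integrable.smul_measure ?_ (hfin r)
      refine ⟨(hgc α).aestronglyMeasurable, ?_⟩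
      show ∫⁻ x, ‖g α x‖₊ ∂(Measure.dirac (a r)) < ⊤
      rw [lintegral_dirac]
      exact ENNReal.coe_lt_top
    have hμtint : ∀ α : ℝ, ∫ x, g α x ∂μt = ∑ r : R, (μ (A' r)).toReal * g α (a r) := by
      intro α
      rw [hμt, integral_finset_sum_measure fun r _ => hdint α r]
      refine Finset.sum_congr rfl fun r _ => ?_
      rw [integral_smul_measure, integral_dirac, smul_eq_mul]
    have hkey : ∀ α : ℝ, ∫ x, g α x ∂μ ≤ ∫ x, g α x ∂μt := by
      intro α
      have hres : μ.restrict (⋃ r, A' r) = μ :=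
        Measure.restrict_eq_self_of_ae_mem (by rw [hA'union]; exact hae μ ⟨hμ1, hμA, hμj⟩)
      have hsplit : ∫ x in ⋃ r, A' r, g α x ∂μ = ∑ r : R, ∫ x in A' r, g α x ∂μ :=
        integral_iUnion_fintype hA'meas hA'disj
          (fun r => (hint μ ⟨hμ1, hμA, hμj⟩ α).integrableOn)
      have hterm : ∀ r : R, ∫ x in A' r, g α x ∂μ ≤ (μ (A' r)).toReal * g α (a r) := by
        intro r
        have h1' : ∫ x in A' r, g α x ∂μ ≤ ∫ x in A' r, g α (a r) ∂μ :=
          setIntegral_mono_on ((hint μ ⟨hμ1, hμA, hμj⟩ α).integrableOn)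
            (integrableOn_const (measure_ne_top μ _))
            (hA'meas r) (fun x hx => hgmono α r x hx)
        rwa [setIntegral_const, smul_eq_mul] at h1'
      calc ∫ x, g α x ∂μ = ∫ x in ⋃ r, A' r, g α x ∂μ := by rw [hres]
        _ = ∑ r : R, ∫ x in A' r, g α x ∂μ := hsplit
        _ ≤ ∑ r : R, (μ (A' r)).toReal * g α (a r) := Finset.sum_le_sum fun r _ => hterm r
        _ = ∫ x, g α x ∂μt := (hμtint α).symm
    refine ⟨hμtUC, ?_⟩
    show cvar β μ f ≤ cvar β μt f
    rw [cvar, cvar]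
    refine le_csInf (hsemne μt) ?_
    rintro v ⟨α, hα, rfl⟩
    calc sInf {v : ℝ | ∃ α : ℝ, 0 ≤ α ∧
          v = α + (1 / (1 - β)) * ∫ x, max (f x - α) 0 ∂μ}
        ≤ α + (1 / (1 - β)) * ∫ x, max (f x - α) 0 ∂μ :=
          csInf_le (hbddb μ) ⟨α, hα, rfl⟩
      _ ≤ α + (1 / (1 - β)) * ∫ x, max (f x - α) 0 ∂μt := by
          have := mul_le_mul_of_nonneg_left (hkey α) hK'
          linarith
  refine ⟨hmain, ?_⟩
  -- the sup equality
  set S₁ : Set ℝ := {w : ℝ | ∃ μ ∈ UC A A' Rj lam, w = cvar β μ (distToDeployment c y)}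
    with hS₁
  set S₂ : Set ℝ := {w : ℝ | ∃ μ ∈ UC A A' Rj lam,
      μ (Set.range a) = 1 ∧ w = cvar β μ (distToDeployment c y)} with hS₂
  have hS21 : S₂ ⊆ S₁ := by
    rintro w ⟨μ, hμ, -, rfl⟩
    exact ⟨μ, hμ, rfl⟩
  by_cases hUC : (UC A A' Rj lam).Nonempty
  · -- upper bound for cvar over UC
    have hub : ∀ ν ∈ UC A A' Rj lam, cvar β ν f ≤ (1 / (1 - β)) * M := by
      intro ν hν
      haveI : IsProbabilityMeasure ν := ⟨hν.1⟩
      have h0 : cvar β ν f ≤ 0 + (1 / (1 - β)) * ∫ x, max (f x - 0) 0 ∂ν :=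
        csInf_le (hbddb ν) ⟨0, le_rfl, rfl⟩
      have hIle : ∫ x, max (f x - 0) 0 ∂ν ≤ M := by
        have : ∫ x, max (f x - 0) 0 ∂ν ≤ ∫ _x, M ∂ν := by
          refine integral_mono_ae (hint ν hν 0) (integrable_const M) ?_
          filter_upwards [hae ν hν] with x hx
          have := hgbd 0 x hx
          simpa [hg, hM0, max_eq_left hM0] using this
        simpa using this
      have := mul_le_mul_of_nonneg_left hIle hK'
      linarith
    have hbdd1 : BddAbove S₁ := by
      refine ⟨(1 / (1 - β)) * M, ?_⟩
      rintro w ⟨μ, hμ, rfl⟩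
      exact hub μ hμ
    have hbdd2 : BddAbove S₂ := hbdd1.mono hS21
    obtain ⟨μ₀, hμ₀⟩ := hUC
    -- the pushed-forward discrete measure gives membership in S₂
    have htilde : ∀ μ ∈ UC A A' Rj lam,
        (∑ r : R, μ (A' r) • Measure.dirac (a r)) ∈ UC A A' Rj lam ∧
        (∑ r : R, μ (A' r) • Measure.dirac (a r)) (Set.range a) = 1 ∧
        cvar β μ f ≤ cvar β (∑ r : R, μ (A' r) • Measure.dirac (a r)) f := by
      intro μ hμ
      obtain ⟨hmem, hle⟩ := hmain μ hμ
      refine ⟨hmem, ?_, hle⟩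
      have hrange : MeasurableSet (Set.range a) := (Set.finite_range a).measurableSet
      have h1 : ∑ r : R, μ (A' r) = 1 := by
        rw [← tsum_fintype (L := .unconditional _), ← measure_iUnion hA'disj hA'meas, hA'union, hμ.2.1]
      rw [Measure.finset_sum_apply]
      calc ∑ r : R, (μ (A' r) • Measure.dirac (a r)) (Set.range a)
          = ∑ r : R, μ (A' r) := by
            refine Finset.sum_congr rfl fun r _ => ?_
            rw [Measure.smul_apply, Measure.dirac_apply' _ hrange, smul_eq_mul,
              Set.indicator_of_mem (Set.mem_range_self r)]
            simp
        _ = 1 := h1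
    have hS₂ne : S₂.Nonempty := by
      obtain ⟨hmem, hr, -⟩ := htilde μ₀ hμ₀
      exact ⟨_, _, hmem, hr, rfl⟩
    have hS₁ne : S₁.Nonempty := hS₂ne.mono hS21
    apply le_antisymm
    · refine csSup_le hS₁ne ?_
      rintro w ⟨μ, hμ, rfl⟩
      obtain ⟨hmem, hr, hle⟩ := htilde μ hμ
      exact hle.trans (le_csSup hbdd2 ⟨_, hmem, hr, rfl⟩)
    · refine csSup_le hS₂ne fun w hw => le_csSup hbdd1 (hS21 hw)
  · have h1 : S₁ = ∅ := by
      rw [Set.eq_empty_iff_forall_notMem]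
      rintro w ⟨μ, hμ, -⟩
      exact hUC ⟨μ, hμ⟩
    have h2 : S₂ = ∅ := by
      rw [Set.eq_empty_iff_forall_notMem]
      rintro w ⟨μ, hμ, -⟩
      exact hUC ⟨μ, hμ⟩
    rw [h1, h2]
end

section
/- Assume each k ∈ K belongs to exactly one K_j and λ_j = 1/n for all j. Then the optimal value of the robust CVaR facility-location problem at risk level β = 0, namely inf_{y∈Y} inf_{z∈Z(y)} sup_{u∈U} inf_{α≥0} ( α + Σ_{k∈K} u_k · max( Σ_{i∈I} d_{ik} z_{ik} − α, 0 ) ), equals the optimal value of the robust p-median problem with equally weighted demand points, namely inf_{y∈Y} inf_{z∈Z(y)} sup_{x∈X} Σ_{j=1}^n (1/n) Σ_{k∈K_j} Σ_{i∈I} d_{ik} z_{ik} x_{jk}. -/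
open Finset

/-- Binary deployment vectors with exactly `P` facilities. -/
def Yset (I : Type*) [Fintype I] (P : ℕ) : Set (I → ℝ) :=
  {y | (∀ i, y i = 0 ∨ y i = 1) ∧ (∑ i, y i) = (P : ℝ)}

/-- Feasible assignments given a deployment `y`. -/
def Zset {I K : Type*} [Fintype I] [Fintype K] (y : I → ℝ) : Set (I → K → ℝ) :=
  {z | (∀ i k, 0 ≤ z i k) ∧ (∀ k, (∑ i, z i k) = 1) ∧ ∀ i k, z i k ≤ y i}

/-- The distributional uncertainty set `U` for the partition `K_j = Kpart⁻¹(j)`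
with weights `λ_j`. -/
def Uset {K : Type*} [Fintype K] {n : ℕ} (Kpart : K → Fin n) (lam : Fin n → ℝ) :
    Set (K → ℝ) :=
  {u | (∀ k, 0 ≤ u k) ∧ (∑ k, u k) = 1 ∧
    ∀ j, (∑ k ∈ univ.filter (fun k => Kpart k = j), u k) = lam j}

/-- The adversary's set `X = Π_j X_j`: a conditional distribution on each `K_j`. -/
def Xset {K : Type*} [Fintype K] {n : ℕ} (Kpart : K → Fin n) : Set (K → ℝ) :=
  {x | (∀ k, 0 ≤ x k) ∧ ∀ j, (∑ k ∈ univ.filter (fun k => Kpart k = j), x k) = 1}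

lemma inner_cvar_eq {K : Type*} [Fintype K] (c u : K → ℝ)
    (hc : ∀ k, 0 ≤ c k) (hu0 : ∀ k, 0 ≤ u k) (hu1 : (∑ k, u k) = 1) :
    sInf {t : ℝ | ∃ α : ℝ, 0 ≤ α ∧ t = α + ∑ k, u k * max (c k - α) 0} =
      ∑ k, u k * c k := by
  have hbound : ∀ t ∈ {t : ℝ | ∃ α : ℝ, 0 ≤ α ∧ t = α + ∑ k, u k * max (c k - α) 0},
      ∑ k, u k * c k ≤ t := by
    rintro t ⟨α, hα, rfl⟩
    have h1 : ∑ k, u k * (c k - α) ≤ ∑ k, u k * max (c k - α) 0 :=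
      Finset.sum_le_sum fun k _ => mul_le_mul_of_nonneg_left (le_max_left _ _) (hu0 k)
    have h2 : ∑ k, u k * (c k - α) = (∑ k, u k * c k) - α := by
      simp [mul_sub, Finset.sum_sub_distrib, ← Finset.sum_mul, hu1]
    linarith
  have hmem : (∑ k, u k * c k) ∈
      {t : ℝ | ∃ α : ℝ, 0 ≤ α ∧ t = α + ∑ k, u k * max (c k - α) 0} := by
    refine ⟨0, le_refl 0, ?_⟩
    rw [zero_add]
    exact Finset.sum_congr rfl fun k _ => by rw [sub_zero, max_eq_left (hc k)]
  exact le_antisymm (csInf_le ⟨_, hbound⟩ hmem) (le_csInf ⟨_, hmem⟩ hbound)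

/-- with `β = 0` and equal weights `λ_j = 1/n`, the robust CVaR
facility-location problem coincides with the robust `p`-median problem. -/
theorem robust_cvar_eq_robust_pmedian
    {I K : Type*} [Fintype I] [Fintype K] [Nonempty I] [Nonempty K]
    (n : ℕ) (hn : 0 < n) (Kpart : K → Fin n) (hKpart : Function.Surjective Kpart)
    (d : I → K → ℝ) (hd : ∀ i k, 0 ≤ d i k)
    (P : ℕ) (hP1 : 1 ≤ P) (hP2 : P ≤ Fintype.card I) :
    sInf {v : ℝ | ∃ y ∈ Yset I P, ∃ z ∈ Zset y, v =
        sSup {w : ℝ | ∃ u ∈ Uset Kpart (fun _ => 1 / (n : ℝ)), w =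
          sInf {t : ℝ | ∃ α : ℝ, 0 ≤ α ∧
            t = α + ∑ k, u k * max ((∑ i, d i k * z i k) - α) 0}}} =
      sInf {v : ℝ | ∃ y ∈ Yset I P, ∃ z ∈ Zset y, v =
        sSup {w : ℝ | ∃ x ∈ Xset Kpart, w =
          ∑ j, (1 / (n : ℝ)) * ∑ k ∈ Finset.univ.filter (fun k => Kpart k = j),
            (∑ i, d i k * z i k) * x k}} := by
  have hn' : (n : ℝ) ≠ 0 := Nat.cast_ne_zero.mpr hn.ne'
  have hfib : ∀ f : K → ℝ,
      (∑ j, ∑ k ∈ univ.filter (fun k => Kpart k = j), f k) = ∑ k, f k := fun f =>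
    Finset.sum_fiberwise univ Kpart f
  have key : ∀ z : I → K → ℝ, (∀ i k, 0 ≤ z i k) →
      sSup {w : ℝ | ∃ u ∈ Uset Kpart (fun _ => 1 / (n : ℝ)), w =
          sInf {t : ℝ | ∃ α : ℝ, 0 ≤ α ∧
            t = α + ∑ k, u k * max ((∑ i, d i k * z i k) - α) 0}} =
      sSup {w : ℝ | ∃ x ∈ Xset Kpart, w =
          ∑ j, (1 / (n : ℝ)) * ∑ k ∈ Finset.univ.filter (fun k => Kpart k = j),
            (∑ i, d i k * z i k) * x k} := by
    intro z hznn
    congr 1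
    set c : K → ℝ := fun k => ∑ i, d i k * z i k with hcdef
    have hc : ∀ k, 0 ≤ c k := fun k =>
      Finset.sum_nonneg fun i _ => mul_nonneg (hd i k) (hznn i k)
    ext w
    constructor
    · rintro ⟨u, ⟨hu0, hu1, huj⟩, rfl⟩
      refine ⟨fun k => (n : ℝ) * u k, ⟨fun k => mul_nonneg (by positivity) (hu0 k), ?_⟩, ?_⟩
      · intro j
        rw [← Finset.mul_sum, huj j]
        field_simp
      · rw [inner_cvar_eq c u hc hu0 hu1]
        have : ∀ j : Fin n,
            (1 / (n:ℝ)) * ∑ k ∈ univ.filter (fun k => Kpart k = j), c k * ((n:ℝ) * u k)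
              = ∑ k ∈ univ.filter (fun k => Kpart k = j), u k * c k := by
          intro j
          rw [Finset.mul_sum]
          exact Finset.sum_congr rfl fun k _ => by field_simp
        rw [Finset.sum_congr rfl fun j _ => this j, hfib (fun k => u k * c k)]
    · rintro ⟨x, ⟨hx0, hxj⟩, rfl⟩
      refine ⟨fun k => x k / n, ⟨fun k => div_nonneg (hx0 k) (by positivity), ?_, ?_⟩, ?_⟩
      · rw [← hfib (fun k => x k / n)]
        have : ∀ j : Fin n,
            (∑ k ∈ univ.filter (fun k => Kpart k = j), x k / n) = 1 / n := by
          intro j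
          rw [← Finset.sum_div, hxj j]
        rw [Finset.sum_congr rfl fun j _ => this j]
        simp [Finset.sum_const]
        field_simp
      · intro j
        rw [← Finset.sum_div, hxj j]
      · rw [inner_cvar_eq c _ hc (fun k => div_nonneg (hx0 k) (by positivity))]
        · rw [← hfib (fun k => x k / n * c k)]
          refine Finset.sum_congr rfl fun j _ => ?_
          rw [Finset.mul_sum]
          exact Finset.sum_congr rfl fun k _ => by field_simp; ring
        · rw [← hfib (fun k => x k / n)]
          have : ∀ j : Fin n,
              (∑ k ∈ univ.filter (fun k => Kpart k = j), x k / n) = 1 / n := by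
            intro j
            rw [← Finset.sum_div, hxj j]
          rw [Finset.sum_congr rfl fun j _ => this j]
          simp [Finset.sum_const]
          field_simp
  congr 1
  ext v
  constructor
  · rintro ⟨y, hy, z, hz, rfl⟩
    exact ⟨y, hy, z, hz, key z hz.1⟩
  · rintro ⟨y, hy, z, hz, rfl⟩
    exact ⟨y, hy, z, hz, (key z hz.1).symm⟩
end

section
/- Assume each k ∈ K belongs to exactly one K_j and λ_j = 1/n for all j, and let β satisfy (n−1)/n ≤ β < 1. Then the optimal value of the robust CVaR facility-location problem inf_{y∈Y} inf_{z∈Z(y)} sup_{u∈U} inf_{α≥0} ( α + (1/(1−β)) Σ_{k∈K} u_k · max( Σ_{i∈I} d_{ik} z_{ik} − α, 0 ) ) equals the optimal value of the robust p-center problem inf_{y∈Y} inf_{z∈Z(y)} sup_{x∈X} max_{1≤j≤n} Σ_{k∈K_j} Σ_{i∈I} d_{ik} z_{ik} x_{jk}. -/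
open Finset

section Aux

variable {K : Type*} [Fintype K] [Nonempty K] {n : ℕ}

open Classical in
/-- The CVaR inner sup equals the maximum of `c`. -/
lemma cvar_inner_eq (hn : 0 < n) (Kpart : K → Fin n) (hKpart : Function.Surjective Kpart)
    (β : ℝ) (hβ1 : ((n : ℝ) - 1) / n ≤ β) (hβ2 : β < 1)
    (c : K → ℝ) (hc : ∀ k, 0 ≤ c k) :
    sSup {w : ℝ | ∃ u ∈ Uset Kpart (fun _ => 1 / (n : ℝ)), w =
      sInf {t : ℝ | ∃ α : ℝ, 0 ≤ α ∧
        t = α + (1 / (1 - β)) * ∑ k, u k * max (c k - α) 0}} =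
    univ.sup' univ_nonempty c := by
  have hn' : (0 : ℝ) < n := by exact_mod_cast hn
  have h1β : 0 < 1 - β := by linarith
  have hβn : (1 - β) * n ≤ 1 := by
    have := (div_le_iff₀ hn').mp hβ1
    nlinarith
  set M := univ.sup' univ_nonempty c with hM
  obtain ⟨kstar, -, hkstar⟩ := Finset.exists_mem_eq_sup' univ_nonempty c
  have hMk : M = c kstar := hM.trans hkstar
  have hM0 : 0 ≤ M := by rw [hMk]; exact hc kstar
  have hcleM : ∀ k, c k ≤ M := fun k => Finset.le_sup' c (mem_univ k)
  -- representative of each block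
  set g : Fin n → K := fun j => if j = Kpart kstar then kstar else Function.surjInv hKpart j
    with hgdef
  have hg : ∀ j, Kpart (g j) = j := by
    intro j
    by_cases h : j = Kpart kstar
    · simp [hgdef, h]
    · simp [hgdef, h, Function.surjInv_eq hKpart]
  have hgstar : g (Kpart kstar) = kstar := by simp [hgdef]
  -- the concentrated distribution
  set u : K → ℝ := fun k => if k = g (Kpart k) then 1 / (n : ℝ) else 0 with hudef
  have hufib : ∀ j, (∑ k ∈ univ.filter (fun k => Kpart k = j), u k) = 1 / (n : ℝ) := by
    intro j
    refine Finset.sum_eq_single_of_mem (g j) (by simp [hg j]) ?_ |>.trans ?_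
    · intro k hk hne
      have hkj : Kpart k = j := (mem_filter.mp hk).2
      have : k ≠ g (Kpart k) := by rw [hkj]; exact hne
      simp [hudef, this]
    · simp [hudef, hg j]
  have hu : u ∈ Uset Kpart (fun _ => 1 / (n : ℝ)) := by
    refine ⟨fun k => ?_, ?_, hufib⟩
    · have hrfl : u k = if k = g (Kpart k) then 1 / (n:ℝ) else 0 := rfl
      rw [hrfl]; split <;> positivity
    · rw [← Finset.sum_fiberwise univ Kpart u]
      simp only [hufib]
      rw [Finset.sum_const, card_univ, Fintype.card_fin, nsmul_eq_mul]
      field_simp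
  -- for any feasible u', M belongs to the inner inf set, and the set is bounded below by 0
  have hMmem : ∀ u' : K → ℝ, (M : ℝ) ∈ {t : ℝ | ∃ α : ℝ, 0 ≤ α ∧
      t = α + (1 / (1 - β)) * ∑ k, u' k * max (c k - α) 0} := by
    intro u'
    refine ⟨M, hM0, ?_⟩
    have : ∀ k, max (c k - M) 0 = 0 := fun k => max_eq_right (by linarith [hcleM k])
    simp [this]
  have hbdd0 : ∀ u' : K → ℝ, (∀ k, 0 ≤ u' k) →
      ∀ t ∈ {t : ℝ | ∃ α : ℝ, 0 ≤ α ∧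
        t = α + (1 / (1 - β)) * ∑ k, u' k * max (c k - α) 0}, (0:ℝ) ≤ t := by
    rintro u' hu' t ⟨α, hα, rfl⟩
    have hs : 0 ≤ ∑ k, u' k * max (c k - α) 0 :=
      Finset.sum_nonneg fun k _ => mul_nonneg (hu' k) (le_max_right _ _)
    have : 0 ≤ (1 / (1 - β)) * ∑ k, u' k * max (c k - α) 0 :=
      mul_nonneg (by positivity) hs
    linarith
  -- upper bound: every element of the sup set is ≤ M
  have hub : ∀ w ∈ {w : ℝ | ∃ u ∈ Uset Kpart (fun _ => 1 / (n : ℝ)), w =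
      sInf {t : ℝ | ∃ α : ℝ, 0 ≤ α ∧
        t = α + (1 / (1 - β)) * ∑ k, u k * max (c k - α) 0}}, w ≤ M := by
    rintro w ⟨u', hu', rfl⟩
    exact csInf_le ⟨0, hbdd0 u' hu'.1⟩ (hMmem u')
  -- for the concentrated u, the inner inf equals M
  have hlow : ∀ t ∈ {t : ℝ | ∃ α : ℝ, 0 ≤ α ∧
      t = α + (1 / (1 - β)) * ∑ k, u k * max (c k - α) 0}, M ≤ t := by
    rintro t ⟨α, hα, rfl⟩
    have hukstar : u kstar = 1 / (n : ℝ) := by simp [hudef, hgstar]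
    have hsingle : u kstar * max (c kstar - α) 0 ≤ ∑ k, u k * max (c k - α) 0 :=
      Finset.single_le_sum (f := fun k => u k * max (c k - α) 0)
        (fun k _ => mul_nonneg (hu.1 k) (le_max_right _ _)) (mem_univ kstar)
    rw [hukstar, ← hMk] at hsingle
    have hcoef : 0 ≤ (1 / (1 - β)) := by positivity
    have hmul : (1 / (1 - β)) * ((1 / (n:ℝ)) * max (M - α) 0) ≤
        (1 / (1 - β)) * ∑ k, u k * max (c k - α) 0 :=
      mul_le_mul_of_nonneg_left hsingle hcoef
    rcases le_or_gt α M with h | h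
    · have hmax : max (M - α) 0 = M - α := max_eq_left (by linarith)
      have heq : (1 / (1 - β)) * ((1 / (n:ℝ)) * (M - α)) = (M - α) / ((1 - β) * (n:ℝ)) := by
        field_simp
      have hpos : 0 < (1 - β) * (n:ℝ) := mul_pos h1β hn'
      have hkey : (M - α) ≤ (M - α) / ((1 - β) * (n:ℝ)) := by
        rw [le_div_iff₀ hpos]
        exact mul_le_of_le_one_right (by linarith) hβn
      rw [hmax, heq] at hmul
      linarith
    · have hs : 0 ≤ (1 / (1 - β)) * ∑ k, u k * max (c k - α) 0 :=
        mul_nonneg hcoef (Finset.sum_nonneg fun k _ => mul_nonneg (hu.1 k) (le_max_right _ _))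
      linarith
  have hinf : sInf {t : ℝ | ∃ α : ℝ, 0 ≤ α ∧
      t = α + (1 / (1 - β)) * ∑ k, u k * max (c k - α) 0} = M :=
    le_antisymm (csInf_le ⟨0, hbdd0 u hu.1⟩ (hMmem u)) (le_csInf ⟨M, hMmem u⟩ hlow)
  have hMS : (M : ℝ) ∈ {w : ℝ | ∃ u ∈ Uset Kpart (fun _ => 1 / (n : ℝ)), w =
      sInf {t : ℝ | ∃ α : ℝ, 0 ≤ α ∧
        t = α + (1 / (1 - β)) * ∑ k, u k * max (c k - α) 0}} := ⟨u, hu, hinf.symm⟩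
  exact le_antisymm (csSup_le ⟨M, hMS⟩ hub) (le_csSup ⟨M, hub⟩ hMS)

open Classical in
/-- The p-center inner sup equals the maximum of `c`. -/
lemma pcenter_inner_eq (hn : 0 < n) (Kpart : K → Fin n) (hKpart : Function.Surjective Kpart)
    (c : K → ℝ) :
    sSup {w : ℝ | ∃ x ∈ Xset Kpart, w =
      ⨆ j : Fin n, ∑ k ∈ Finset.univ.filter (fun k => Kpart k = j), c k * x k} =
    univ.sup' univ_nonempty c := by
  haveI : Nonempty (Fin n) := Fin.pos_iff_nonempty.mp hn
  set M := univ.sup' univ_nonempty c with hM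
  obtain ⟨kstar, -, hkstar⟩ := Finset.exists_mem_eq_sup' univ_nonempty c
  have hMk : M = c kstar := hM.trans hkstar
  have hcleM : ∀ k, c k ≤ M := fun k => Finset.le_sup' c (mem_univ k)
  set g : Fin n → K := fun j => if j = Kpart kstar then kstar else Function.surjInv hKpart j
    with hgdef
  have hg : ∀ j, Kpart (g j) = j := by
    intro j
    by_cases h : j = Kpart kstar
    · simp [hgdef, h]
    · simp [hgdef, h, Function.surjInv_eq hKpart]
  have hgstar : g (Kpart kstar) = kstar := by simp [hgdef]
  set x : K → ℝ := fun k => if k = g (Kpart k) then 1 else 0 with hxdef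
  have hxfib : ∀ j (f : K → ℝ),
      (∑ k ∈ univ.filter (fun k => Kpart k = j), f k * x k) = f (g j) := by
    intro j f
    refine Finset.sum_eq_single_of_mem (g j) (by simp [hg j]) ?_ |>.trans ?_
    · intro k hk hne
      have hkj : Kpart k = j := (mem_filter.mp hk).2
      have : k ≠ g (Kpart k) := by rw [hkj]; exact hne
      simp [hxdef, this]
    · simp [hxdef, hg j]
  have hx : x ∈ Xset Kpart := by
    refine ⟨fun k => ?_, fun j => ?_⟩
    · have hrfl : x k = if k = g (Kpart k) then 1 else 0 := rfl
      rw [hrfl]; split <;> norm_num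
    · have := hxfib j (fun _ => 1)
      simpa using this
  -- every element of the sup set is ≤ M
  have hub : ∀ w ∈ {w : ℝ | ∃ x ∈ Xset Kpart, w =
      ⨆ j : Fin n, ∑ k ∈ Finset.univ.filter (fun k => Kpart k = j), c k * x k}, w ≤ M := by
    rintro w ⟨x', hx', rfl⟩
    refine ciSup_le fun j => ?_
    calc ∑ k ∈ univ.filter (fun k => Kpart k = j), c k * x' k
        ≤ ∑ k ∈ univ.filter (fun k => Kpart k = j), M * x' k :=
          Finset.sum_le_sum fun k _ => mul_le_mul_of_nonneg_right (hcleM k) (hx'.1 k)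
      _ = M * ∑ k ∈ univ.filter (fun k => Kpart k = j), x' k := by rw [Finset.mul_sum]
      _ = M := by rw [hx'.2 j, mul_one]
  -- the concentrated x attains M
  have hattain : (⨆ j : Fin n, ∑ k ∈ Finset.univ.filter (fun k => Kpart k = j), c k * x k)
      = M := by
    have hrw : (⨆ j : Fin n, ∑ k ∈ Finset.univ.filter (fun k => Kpart k = j), c k * x k)
        = ⨆ j : Fin n, c (g j) := iSup_congr fun j => hxfib j c
    rw [hrw]
    refine le_antisymm (ciSup_le fun j => hcleM (g j)) ?_
    have := le_ciSup (Set.Finite.bddAbove (Set.finite_range fun j => c (g j))) (Kpart kstar)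
    rw [hgstar, ← hMk] at this
    exact this
  have hMS : (M : ℝ) ∈ {w : ℝ | ∃ x ∈ Xset Kpart, w =
      ⨆ j : Fin n, ∑ k ∈ Finset.univ.filter (fun k => Kpart k = j), c k * x k} :=
    ⟨x, hx, hattain.symm⟩
  exact le_antisymm (csSup_le ⟨M, hMS⟩ hub) (le_csSup ⟨M, hub⟩ hMS)

end Aux

/-- with equal weights `λ_j = 1/n` and `(n-1)/n ≤ β < 1`, the robust
CVaR facility-location problem coincides with the robust `p`-center problem. -/
theorem robust_cvar_eq_robust_pcenter
    {I K : Type*} [Fintype I] [Fintype K] [Nonempty I] [Nonempty K]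
    (n : ℕ) (hn : 0 < n) (Kpart : K → Fin n) (hKpart : Function.Surjective Kpart)
    (d : I → K → ℝ) (hd : ∀ i k, 0 ≤ d i k)
    (P : ℕ) (hP1 : 1 ≤ P) (hP2 : P ≤ Fintype.card I)
    (β : ℝ) (hβ1 : ((n : ℝ) - 1) / n ≤ β) (hβ2 : β < 1) :
    sInf {v : ℝ | ∃ y ∈ Yset I P, ∃ z ∈ Zset y, v =
        sSup {w : ℝ | ∃ u ∈ Uset Kpart (fun _ => 1 / (n : ℝ)), w =
          sInf {t : ℝ | ∃ α : ℝ, 0 ≤ α ∧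
            t = α + (1 / (1 - β)) * ∑ k, u k * max ((∑ i, d i k * z i k) - α) 0}}} =
      sInf {v : ℝ | ∃ y ∈ Yset I P, ∃ z ∈ Zset y, v =
        sSup {w : ℝ | ∃ x ∈ Xset Kpart, w =
          ⨆ j : Fin n, ∑ k ∈ Finset.univ.filter (fun k => Kpart k = j),
            (∑ i, d i k * z i k) * x k}} := by
  have key : ∀ z : I → K → ℝ, (∀ i k, 0 ≤ z i k) →
      sSup {w : ℝ | ∃ u ∈ Uset Kpart (fun _ => 1 / (n : ℝ)), w =
          sInf {t : ℝ | ∃ α : ℝ, 0 ≤ α ∧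
            t = α + (1 / (1 - β)) * ∑ k, u k * max ((∑ i, d i k * z i k) - α) 0}} =
      sSup {w : ℝ | ∃ x ∈ Xset Kpart, w =
          ⨆ j : Fin n, ∑ k ∈ Finset.univ.filter (fun k => Kpart k = j),
            (∑ i, d i k * z i k) * x k} := by
    intro z hz
    have hc : ∀ k, 0 ≤ ∑ i, d i k * z i k :=
      fun k => Finset.sum_nonneg fun i _ => mul_nonneg (hd i k) (hz i k)
    rw [cvar_inner_eq hn Kpart hKpart β hβ1 hβ2 _ hc,
      pcenter_inner_eq hn Kpart hKpart]
  congr 1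
  ext v
  simp only [Set.mem_setOf_eq]
  constructor
  · rintro ⟨y, hy, z, hz, rfl⟩
    exact ⟨y, hy, z, hz, key z hz.1⟩
  · rintro ⟨y, hy, z, hz, rfl⟩
    exact ⟨y, hy, z, hz, (key z hz.1).symm⟩
end

section
/- Let K be a nonempty finite set, let β ∈ [0,1), let u ∈ ℝ^K satisfy u_k ≥ 0 for all k and Σ_{k∈K} u_k = 1, and let t ∈ ℝ^K satisfy t_k ≥ 0 for all k. Then inf_{α ≥ 0} ( α + (1/(1−β)) Σ_{k∈K} u_k · max(t_k − α, 0) ) = max { Σ_{k∈K} t_k p_k : p ∈ ℝ^K, p_k ≥ 0 for all k, Σ_{k∈K} p_k ≤ 1, and (1−β) p_k ≤ u_k for all k }, and the maximum on the right-hand side is attained. -/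
open Finset

/-- dual representation of discrete CVaR: for a probability vector `u`
and nonnegative losses `t`,
`inf_{α ≥ 0} (α + (1/(1-β)) Σ_k u_k max(t_k - α, 0))`
equals the maximum of `Σ_k t_k p_k` over the dual polyhedron
`{p ≥ 0 : Σ_k p_k ≤ 1, (1-β) p_k ≤ u_k}`, and this maximum is attained. -/
theorem cvar_dual_representation
    {K : Type*} [Fintype K] [Nonempty K]
    (β : ℝ) (hβ0 : 0 ≤ β) (hβ1 : β < 1)
    (u t : K → ℝ) (hu0 : ∀ k, 0 ≤ u k) (hu1 : (∑ k, u k) = 1) (ht : ∀ k, 0 ≤ t k) :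
    IsGreatest
      {w : ℝ | ∃ p : K → ℝ, (∀ k, 0 ≤ p k) ∧ (∑ k, p k) ≤ 1 ∧
        (∀ k, (1 - β) * p k ≤ u k) ∧ w = ∑ k, t k * p k}
      (sInf {s : ℝ | ∃ α : ℝ, 0 ≤ α ∧
        s = α + (1 / (1 - β)) * ∑ k, u k * max (t k - α) 0}) := by
  have h1β : (0:ℝ) < 1 - β := by linarith
  set c : ℝ := 1 / (1 - β) with hcdef
  have hc : 0 < c := by positivity
  have hcβ : (1 - β) * c = 1 := by rw [hcdef, mul_one_div, div_self h1β.ne']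
  set f : ℝ → ℝ := fun α => α + c * ∑ k, u k * max (t k - α) 0 with hfdef
  -- key identities
  have keyGT : ∀ α : ℝ, ∑ k, u k * max (t k - α) 0
      = ∑ k ∈ univ.filter (fun k => α < t k), u k * (t k - α) := by
    intro α
    rw [Finset.sum_filter]
    refine Finset.sum_congr rfl fun k _ => ?_
    by_cases h : α < t k
    · rw [if_pos h, max_eq_left (by linarith)]
    · rw [if_neg h, max_eq_right (by push_neg at h; linarith), mul_zero]
  have keyGE : ∀ α : ℝ, ∑ k, u k * max (t k - α) 0
      = ∑ k ∈ univ.filter (fun k => α ≤ t k), u k * (t k - α) := by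
    intro α
    rw [Finset.sum_filter]
    refine Finset.sum_congr rfl fun k _ => ?_
    by_cases h : α ≤ t k
    · rw [if_pos h, max_eq_left (by linarith)]
    · rw [if_neg h, max_eq_right (by push_neg at h; linarith), mul_zero]
  -- weak duality
  have weak : ∀ α : ℝ, 0 ≤ α → ∀ p : K → ℝ, (∀ k, 0 ≤ p k) → (∑ k, p k) ≤ 1 →
      (∀ k, (1 - β) * p k ≤ u k) → (∑ k, t k * p k) ≤ f α := by
    intro α hα p hp0 hp1 hpu
    have hcp : ∀ k, p k ≤ c * u k := by
      intro k
      have h := mul_le_mul_of_nonneg_left (hpu k) hc.le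
      calc p k = c * ((1 - β) * p k) := by
            rw [← mul_assoc, mul_comm c (1 - β), hcβ, one_mul]
        _ ≤ c * u k := h
    have h1 : ∀ k, t k * p k ≤ c * (u k * max (t k - α) 0) + α * p k := by
      intro k
      have h2 : (t k - α) * p k ≤ max (t k - α) 0 * p k :=
        mul_le_mul_of_nonneg_right (le_max_left _ _) (hp0 k)
      have h3 : max (t k - α) 0 * p k ≤ max (t k - α) 0 * (c * u k) :=
        mul_le_mul_of_nonneg_left (hcp k) (le_max_right _ _)
      nlinarith [h2, h3]
    calc (∑ k, t k * p k) ≤ ∑ k, (c * (u k * max (t k - α) 0) + α * p k) :=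
          Finset.sum_le_sum fun k _ => h1 k
      _ = c * (∑ k, u k * max (t k - α) 0) + α * (∑ k, p k) := by
          rw [Finset.sum_add_distrib, ← Finset.mul_sum, ← Finset.mul_sum]
      _ ≤ c * (∑ k, u k * max (t k - α) 0) + α * 1 := by
          have := mul_le_mul_of_nonneg_left hp1 hα
          linarith
      _ = f α := by
          show c * (∑ k, u k * max (t k - α) 0) + α * 1
            = α + c * ∑ k, u k * max (t k - α) 0
          ring
  -- minimizer over breakpoints
  set S : Finset ℝ := insert 0 (univ.image t) with hSdef
  have htS : ∀ k, t k ∈ S := fun k =>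
    Finset.mem_insert_of_mem (Finset.mem_image_of_mem t (Finset.mem_univ k))
  have h0S : (0:ℝ) ∈ S := Finset.mem_insert_self _ _
  obtain ⟨a₀, ha₀S, ha₀min⟩ := S.exists_min_image f ⟨0, h0S⟩
  have ha₀0 : 0 ≤ a₀ := by
    rcases Finset.mem_insert.1 ha₀S with h | h
    · exact h.ge
    · obtain ⟨k, _, hk⟩ := Finset.mem_image.1 h
      rw [← hk]; exact ht k
  -- global minimality
  have hmin : ∀ α : ℝ, 0 ≤ α → f a₀ ≤ f α := by
    intro α hα
    by_cases hαS : α ∈ S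
    · exact ha₀min α hαS
    by_cases hF : (S.filter (fun s => α ≤ s)).Nonempty
    · obtain ⟨b, hbmem, hbmin⟩ := Finset.exists_min_image _ id hF
      have hbS : b ∈ S := (Finset.mem_filter.1 hbmem).1
      have hαb : α ≤ b := (Finset.mem_filter.1 hbmem).2
      obtain ⟨a, hamem, hamax⟩ := Finset.exists_max_image (S.filter (fun s => s ≤ α)) id
        ⟨0, Finset.mem_filter.2 ⟨h0S, hα⟩⟩
      have haS : a ∈ S := (Finset.mem_filter.1 hamem).1
      have haα : a ≤ α := (Finset.mem_filter.1 hamem).2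
      have dich : ∀ s ∈ S, s ≤ a ∨ b ≤ s := by
        intro s hs
        rcases le_or_gt s α with h | h
        · exact Or.inl (hamax s (Finset.mem_filter.2 ⟨hs, h⟩))
        · exact Or.inr (hbmin s (Finset.mem_filter.2 ⟨hs, h.le⟩))
      have ht' : ∀ k, t k ≤ a ∨ b ≤ t k := fun k => dich (t k) (htS k)
      set F := univ.filter (fun k => b ≤ t k) with hFdef
      have hfg : ∀ x : ℝ, a ≤ x → x ≤ b → f x = x + c * ∑ k ∈ F, u k * (t k - x) := by
        intro x hax hxb
        have : ∑ k, u k * max (t k - x) 0 = ∑ k ∈ F, u k * (t k - x) := by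
          rw [hFdef, Finset.sum_filter]
          refine Finset.sum_congr rfl fun k _ => ?_
          by_cases hbk : b ≤ t k
          · rw [if_pos hbk, max_eq_left (by linarith)]
          · rw [if_neg hbk]
            have htk : t k ≤ a := (ht' k).resolve_right hbk
            rw [max_eq_right (by linarith), mul_zero]
        simp only [hfdef, this]
      set w : ℝ := ∑ k ∈ F, u k with hwdef
      have expand : ∀ x : ℝ, ∑ k ∈ F, u k * (t k - x)
          = (∑ k ∈ F, u k * t k) - x * w := by
        intro x
        rw [hwdef, Finset.mul_sum, ← Finset.sum_sub_distrib]
        refine Finset.sum_congr rfl fun k _ => ?_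
        ring
      rcases le_or_gt (c * w) 1 with hw | hw
      · have h1 : f a ≤ f α := by
          rw [hfg α haα hαb, hfg a le_rfl (le_trans haα hαb), expand, expand]
          nlinarith [haα]
        exact le_trans (ha₀min a haS) h1
      · have h1 : f b ≤ f α := by
          rw [hfg α haα hαb, hfg b (le_trans haα hαb) le_rfl, expand, expand]
          nlinarith [hαb]
        exact le_trans (ha₀min b hbS) h1
    · -- α is above everything in S
      have hgt : ∀ s ∈ S, s < α := by
        intro s hs
        by_contra h
        push_neg at h
        exact hF ⟨s, Finset.mem_filter.2 ⟨hs, h⟩⟩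
      obtain ⟨b, hbS, hbmax⟩ := Finset.exists_max_image S id ⟨0, h0S⟩
      have hfα : f α = α := by
        have : ∀ k ∈ (univ : Finset K), u k * max (t k - α) 0 = 0 := by
          intro k _
          rw [max_eq_right (by linarith [hgt (t k) (htS k)]), mul_zero]
        simp only [hfdef]
        rw [Finset.sum_eq_zero this, mul_zero, add_zero]
      have hfb : f b = b := by
        have : ∀ k ∈ (univ : Finset K), u k * max (t k - b) 0 = 0 := by
          intro k _
          rw [max_eq_right (by linarith [show t k ≤ b from hbmax (t k) (htS k)]), mul_zero]
        simp only [hfdef]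
        rw [Finset.sum_eq_zero this, mul_zero, add_zero]
      have : f b ≤ f α := by rw [hfα, hfb]; exact (hgt b hbS).le
      exact le_trans (ha₀min b hbS) this
  -- filters at the optimum
  set T := univ.filter (fun k => a₀ < t k) with hTdef
  set E := univ.filter (fun k => t k = a₀) with hEdef
  set M : ℝ := c * ∑ k ∈ T, u k with hMdef
  set N : ℝ := c * ∑ k ∈ E, u k with hNdef
  have hsumT : 0 ≤ ∑ k ∈ T, u k := Finset.sum_nonneg fun k _ => hu0 k
  have hsumE : 0 ≤ ∑ k ∈ E, u k := Finset.sum_nonneg fun k _ => hu0 k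
  have hM0 : 0 ≤ M := by rw [hMdef]; exact mul_nonneg hc.le hsumT
  have hN0 : 0 ≤ N := by rw [hNdef]; exact mul_nonneg hc.le hsumE
  have hfa₀ : f a₀ = a₀ + c * ∑ k ∈ T, u k * (t k - a₀) := by
    simp only [hfdef, keyGT a₀, hTdef]
  have hsubT : ∑ k ∈ T, u k * (t k - a₀)
      = (∑ k ∈ T, u k * t k) - a₀ * ∑ k ∈ T, u k := by
    rw [Finset.mul_sum, ← Finset.sum_sub_distrib]
    exact Finset.sum_congr rfl fun k _ => by ring
  -- first optimality condition : M ≤ 1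
  have hM1 : M ≤ 1 := by
    by_cases hT : T.Nonempty
    · obtain ⟨k₀, hk₀, hk₀min⟩ := T.exists_min_image (fun k => t k - a₀) hT
      set ε : ℝ := t k₀ - a₀ with hεdef
      have hk₀' : a₀ < t k₀ := by
        have h := Finset.mem_filter.1 (hTdef ▸ hk₀)
        exact h.2
      have hε : 0 < ε := by rw [hεdef]; linarith
      have hcomp : f (a₀ + ε) = a₀ + ε + c * ∑ k ∈ T, u k * (t k - a₀ - ε) := by
        have hkey : ∑ k, u k * max (t k - (a₀ + ε)) 0
            = ∑ k ∈ T, u k * (t k - a₀ - ε) := by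
          rw [hTdef, Finset.sum_filter]
          refine Finset.sum_congr rfl fun k _ => ?_
          by_cases h : a₀ < t k
          · have h2 : ε ≤ t k - a₀ :=
              hk₀min k (by rw [hTdef]; exact Finset.mem_filter.2 ⟨Finset.mem_univ k, h⟩)
            rw [if_pos h, max_eq_left (by linarith)]
            ring
          · push_neg at h
            rw [if_neg (not_lt.2 h), max_eq_right (by linarith), mul_zero]
        simp only [hfdef, hkey]
      have hle := hmin (a₀ + ε) (by linarith)
      have hsub : ∑ k ∈ T, u k * (t k - a₀ - ε)
          = (∑ k ∈ T, u k * (t k - a₀)) - ε * ∑ k ∈ T, u k := by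
        rw [Finset.mul_sum, ← Finset.sum_sub_distrib]
        exact Finset.sum_congr rfl fun k _ => by ring
      rw [hcomp, hfa₀, hsub] at hle
      have expand2 : c * ((∑ k ∈ T, u k * (t k - a₀)) - ε * ∑ k ∈ T, u k)
          = c * (∑ k ∈ T, u k * (t k - a₀)) - ε * (c * ∑ k ∈ T, u k) := by ring
      rw [expand2] at hle
      have h1 : ε * (c * ∑ k ∈ T, u k) ≤ ε * 1 := by linarith
      rw [hMdef]
      exact le_of_mul_le_mul_left h1 hε
    · rw [Finset.not_nonempty_iff_eq_empty] at hT
      rw [hMdef, hT, Finset.sum_empty, mul_zero]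
      exact zero_le_one
  -- splitting the tail
  have hGTE : ∑ k ∈ univ.filter (fun k => a₀ ≤ t k), u k
      = (∑ k ∈ T, u k) + ∑ k ∈ E, u k := by
    rw [hTdef, hEdef, Finset.sum_filter, Finset.sum_filter, Finset.sum_filter,
      ← Finset.sum_add_distrib]
    refine Finset.sum_congr rfl fun k _ => ?_
    rcases lt_trichotomy (t k) a₀ with h | h | h
    · rw [if_neg (not_le.2 h), if_neg (not_lt.2 h.le), if_neg h.ne]
      simp
    · rw [if_pos h.ge, if_neg (not_lt.2 h.le), if_pos h]
      simp
    · rw [if_pos h.le, if_pos h, if_neg h.ne']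
      simp
  -- second optimality condition : 1 ≤ M + N when a₀ > 0
  have hMN : 0 < a₀ → 1 ≤ M + N := by
    intro hpos
    obtain ⟨ε, hε, hεa, hεlo⟩ :
        ∃ ε : ℝ, 0 < ε ∧ ε ≤ a₀ ∧ ∀ k, t k < a₀ → t k ≤ a₀ - ε := by
      by_cases hLo : (univ.filter (fun k => t k < a₀)).Nonempty
      · obtain ⟨k₀, hk₀, hk₀max⟩ := Finset.exists_max_image _ t hLo
        have hk₀' : t k₀ < a₀ := (Finset.mem_filter.1 hk₀).2
        refine ⟨min a₀ (a₀ - t k₀), lt_min hpos (by linarith), min_le_left _ _, ?_⟩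
        intro k hk
        have h1 : t k ≤ t k₀ := hk₀max k (Finset.mem_filter.2 ⟨Finset.mem_univ k, hk⟩)
        have h2 : min a₀ (a₀ - t k₀) ≤ a₀ - t k₀ := min_le_right _ _
        linarith
      · exact ⟨a₀, hpos, le_refl _, fun k hk =>
          (hLo ⟨k, Finset.mem_filter.2 ⟨Finset.mem_univ k, hk⟩⟩).elim⟩
    have hcomp : f (a₀ - ε)
        = a₀ - ε + c * ∑ k ∈ univ.filter (fun k => a₀ ≤ t k), u k * (t k - a₀ + ε) := by
      have hkey : ∑ k, u k * max (t k - (a₀ - ε)) 0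
          = ∑ k ∈ univ.filter (fun k => a₀ ≤ t k), u k * (t k - a₀ + ε) := by
        rw [Finset.sum_filter]
        refine Finset.sum_congr rfl fun k _ => ?_
        by_cases h : a₀ ≤ t k
        · rw [if_pos h, max_eq_left (by linarith)]
          ring
        · push_neg at h
          have h2 := hεlo k h
          rw [if_neg (not_le.2 h), max_eq_right (by linarith), mul_zero]
      simp only [hfdef, hkey]
    have hfa₀' : f a₀ = a₀ + c * ∑ k ∈ univ.filter (fun k => a₀ ≤ t k), u k * (t k - a₀) := by
      simp only [hfdef, keyGE a₀]
    have hle := hmin (a₀ - ε) (by linarith)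
    have hsub : ∑ k ∈ univ.filter (fun k => a₀ ≤ t k), u k * (t k - a₀ + ε)
        = (∑ k ∈ univ.filter (fun k => a₀ ≤ t k), u k * (t k - a₀))
          + ε * ∑ k ∈ univ.filter (fun k => a₀ ≤ t k), u k := by
      rw [Finset.mul_sum, ← Finset.sum_add_distrib]
      exact Finset.sum_congr rfl fun k _ => by ring
    rw [hcomp, hfa₀', hsub] at hle
    have expand2 : c * ((∑ k ∈ univ.filter (fun k => a₀ ≤ t k), u k * (t k - a₀))
          + ε * ∑ k ∈ univ.filter (fun k => a₀ ≤ t k), u k)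
        = c * (∑ k ∈ univ.filter (fun k => a₀ ≤ t k), u k * (t k - a₀))
          + ε * (c * ∑ k ∈ univ.filter (fun k => a₀ ≤ t k), u k) := by ring
    rw [expand2] at hle
    have h1 : ε * 1 ≤ ε * (c * ∑ k ∈ univ.filter (fun k => a₀ ≤ t k), u k) := by linarith
    have h2 : c * ∑ k ∈ univ.filter (fun k => a₀ ≤ t k), u k = M + N := by
      rw [hGTE, mul_add, hMdef, hNdef]
    rw [h2] at h1
    exact le_of_mul_le_mul_left h1 hε
  -- the dual optimal solution
  set θ : ℝ := if a₀ = 0 ∨ N = 0 then 0 else (1 - M) / N with hθdef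
  have hθ0 : 0 ≤ θ := by
    rw [hθdef]; split_ifs with h
    · exact le_refl 0
    · push_neg at h
      have hNpos : 0 < N := lt_of_le_of_ne hN0 (Ne.symm h.2)
      exact div_nonneg (by linarith) hNpos.le
  have hθ1 : θ ≤ 1 := by
    rw [hθdef]; split_ifs with h
    · exact zero_le_one
    · push_neg at h
      have hNpos : 0 < N := lt_of_le_of_ne hN0 (Ne.symm h.2)
      have hpos : 0 < a₀ := lt_of_le_of_ne ha₀0 (Ne.symm h.1)
      rw [div_le_one hNpos]
      linarith [hMN hpos]
  have hsum_le : M + θ * N ≤ 1 := by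
    rw [hθdef]; split_ifs with h
    · simpa using hM1
    · push_neg at h
      have hNpos : 0 < N := lt_of_le_of_ne hN0 (Ne.symm h.2)
      rw [div_mul_cancel₀ _ hNpos.ne']
      linarith
  have hsum_eq : 0 < a₀ → M + θ * N = 1 := by
    intro hpos
    rw [hθdef]; split_ifs with h
    · rcases h with h | h
      · exact absurd h hpos.ne'
      · have h1 := hMN hpos
        rw [h, add_zero] at h1
        rw [zero_mul, add_zero]
        linarith
    · push_neg at h
      have hNpos : 0 < N := lt_of_le_of_ne hN0 (Ne.symm h.2)
      rw [div_mul_cancel₀ _ hNpos.ne']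
      ring
  set p : K → ℝ := fun k =>
    if a₀ < t k then c * u k else if t k = a₀ then θ * (c * u k) else 0 with hpdef
  have hp0 : ∀ k, 0 ≤ p k := by
    intro k
    rw [hpdef]
    dsimp only
    split_ifs
    · exact mul_nonneg hc.le (hu0 k)
    · exact mul_nonneg hθ0 (mul_nonneg hc.le (hu0 k))
    · exact le_refl 0
  have hpu : ∀ k, (1 - β) * p k ≤ u k := by
    intro k
    rw [hpdef]
    dsimp only
    split_ifs
    · rw [← mul_assoc, hcβ, one_mul]
    · calc (1 - β) * (θ * (c * u k)) = θ * ((1 - β) * c * u k) := by ring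
        _ = θ * u k := by rw [hcβ, one_mul]
        _ ≤ 1 * u k := mul_le_mul_of_nonneg_right hθ1 (hu0 k)
        _ = u k := one_mul _
    · rw [mul_zero]; exact hu0 k
  have hpsplit : ∀ k, p k = (if a₀ < t k then c * u k else 0)
      + (if t k = a₀ then θ * (c * u k) else 0) := by
    intro k
    rw [hpdef]
    dsimp only
    by_cases h1 : a₀ < t k
    · rw [if_pos h1, if_pos h1, if_neg (ne_of_gt h1), add_zero]
    · rw [if_neg h1, if_neg h1, zero_add]
  have hsump : ∑ k, p k = M + θ * N := by
    rw [Finset.sum_congr rfl fun k _ => hpsplit k, Finset.sum_add_distrib,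
      ← Finset.sum_filter, ← Finset.sum_filter, ← Finset.mul_sum, ← Finset.mul_sum,
      ← Finset.mul_sum, hMdef, hNdef, hTdef, hEdef]
  have hval : ∑ k, t k * p k = f a₀ := by
    have hterm : ∀ k, t k * p k = (if a₀ < t k then c * (u k * t k) else 0)
        + (if t k = a₀ then a₀ * (θ * (c * u k)) else 0) := by
      intro k
      rw [hpsplit k]
      by_cases h1 : a₀ < t k
      · rw [if_pos h1, if_pos h1, if_neg (ne_of_gt h1), if_neg (ne_of_gt h1)]
        ring
      · rw [if_neg h1, if_neg h1]
        by_cases h2 : t k = a₀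
        · rw [if_pos h2, if_pos h2, h2]
          ring
        · rw [if_neg h2, if_neg h2]
          ring
    have h1 : ∑ k, t k * p k
        = c * (∑ k ∈ T, u k * t k) + a₀ * (θ * N) := by
      rw [Finset.sum_congr rfl fun k _ => hterm k, Finset.sum_add_distrib,
        ← Finset.sum_filter, ← Finset.sum_filter, ← Finset.mul_sum, ← Finset.mul_sum,
        ← Finset.mul_sum, ← Finset.mul_sum, hNdef, hTdef, hEdef]
    rw [h1, hfa₀, hsubT]
    rcases eq_or_lt_of_le ha₀0 with h | h
    · rw [← h]; ring
    · have he := hsum_eq h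
      have he2 : a₀ * M + a₀ * (θ * N) = a₀ := by
        calc a₀ * M + a₀ * (θ * N) = a₀ * (M + θ * N) := by ring
          _ = a₀ * 1 := by rw [he]
          _ = a₀ := mul_one _
      rw [hMdef] at he2
      linarith [he2]
  -- conclusion
  have hmem : f a₀ ∈ {s : ℝ | ∃ α : ℝ, 0 ≤ α ∧
      s = α + c * ∑ k, u k * max (t k - α) 0} := ⟨a₀, ha₀0, rfl⟩
  have hlb : ∀ s ∈ {s : ℝ | ∃ α : ℝ, 0 ≤ α ∧
      s = α + c * ∑ k, u k * max (t k - α) 0}, f a₀ ≤ s := by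
    rintro s ⟨α, hα, rfl⟩
    exact hmin α hα
  have hInf : sInf {s : ℝ | ∃ α : ℝ, 0 ≤ α ∧
      s = α + c * ∑ k, u k * max (t k - α) 0} = f a₀ :=
    le_antisymm (csInf_le ⟨f a₀, fun s hs => hlb s hs⟩ hmem) (le_csInf ⟨f a₀, hmem⟩ hlb)
  rw [hInf]
  constructor
  · exact ⟨p, hp0, le_trans (le_of_eq hsump) hsum_le, hpu, hval.symm⟩
  · rintro w ⟨q, hq0, hq1, hqu, rfl⟩
    exact weak a₀ ha₀0 q hq0 hq1 hqu
end
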